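/- arXiv:2604.17136 — 5 statements merged into one kernel-verified Lean document; each statement's English description precedes it below -/
import Mathlib

section
/- For every positive integer N, the number of indices n ≥ 1 with F_n ≤ N equals ⌊log(√5·(N + 1/2)) / log φ⌋, where the logarithms are natural logarithms. -/
/-- The golden ratio φ = (1+√5)/2. -/
noncomputable def phi : ℝ := (1 + Real.sqrt 5) / 2

lemma phi_eq : phi = Real.goldenRatio := rfl

lemma fib_close (n : ℕ) : |(Nat.fib n : ℝ) - Real.goldenRatio ^ n / Real.sqrt 5| < 1 / 2 := by
  have h5 : (2:ℝ) < Real.sqrt 5 := by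
    nlinarith [Real.sq_sqrt (by norm_num : (5:ℝ) ≥ 0), Real.sqrt_nonneg 5]
  have h5' : (0:ℝ) < Real.sqrt 5 := by linarith
  rw [Real.coe_fib_eq]
  have : (Real.goldenRatio ^ n - Real.goldenConj ^ n) / Real.sqrt 5 - Real.goldenRatio ^ n / Real.sqrt 5
      = -(Real.goldenConj ^ n) / Real.sqrt 5 := by ring
  rw [this, abs_div, abs_of_pos h5']
  have habs : |Real.goldenConj| < 1 := abs_lt.2 ⟨Real.neg_one_lt_goldenConj, by linarith [Real.goldenConj_neg]⟩
  have h1 : |(-(Real.goldenConj ^ n))| ≤ 1 := by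
    rw [abs_neg, abs_pow]
    exact pow_le_one₀ (abs_nonneg _) habs.le
  rw [div_lt_iff₀ h5']
  nlinarith

/-- The number of indices `n ≥ 1` with `F n ≤ N` equals
`⌊log(√5·(N + 1/2)) / log φ⌋` for every positive integer `N`. -/
theorem fib_counting_function (N : ℕ) (hN : 0 < N) :
    (Nat.card {n : ℕ | 1 ≤ n ∧ Nat.fib n ≤ N} : ℤ) =
      ⌊Real.log (Real.sqrt 5 * ((N : ℝ) + 1 / 2)) / Real.log phi⌋ := by
  have h5 : (2:ℝ) < Real.sqrt 5 := by
    nlinarith [Real.sq_sqrt (by norm_num : (5:ℝ) ≥ 0), Real.sqrt_nonneg 5]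
  have h5' : (0:ℝ) < Real.sqrt 5 := by linarith
  set k := Nat.findGreatest (fun n => Nat.fib n ≤ N) (N + 5) with hk
  have hk1 : 1 ≤ k := Nat.le_findGreatest (by omega) (by simpa using Nat.succ_le_of_lt hN)
  have hkfib : Nat.fib k ≤ N := Nat.findGreatest_spec (P := fun n => Nat.fib n ≤ N)
    (m := 1) (by omega) (by simpa using Nat.succ_le_of_lt hN)
  have hkle : k ≤ N + 5 := Nat.findGreatest_le (P := fun n => Nat.fib n ≤ N) _
  have hklt : k < N + 5 := by
    rcases eq_or_lt_of_le hkle with h | h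
    · exfalso
      have h2 := Nat.le_fib_self (n := N + 5) (by omega)
      rw [← h] at h2
      omega
    · exact h
  have hksucc : N < Nat.fib (k + 1) := by
    have := Nat.findGreatest_is_greatest (P := fun n => Nat.fib n ≤ N) (n := N + 5)
      (k := k + 1) (by omega) (by omega)
    omega
  -- set equality
  have hset : {n : ℕ | 1 ≤ n ∧ Nat.fib n ≤ N} = Set.Icc 1 k := by
    ext n
    simp only [Set.mem_setOf_eq, Set.mem_Icc]
    constructor
    · rintro ⟨h1, h2⟩
      refine ⟨h1, ?_⟩
      by_contra h
      exact absurd (le_trans (Nat.fib_mono (by omega : k + 1 ≤ n)) h2) (by omega)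
    · rintro ⟨h1, h2⟩
      exact ⟨h1, le_trans (Nat.fib_mono h2) hkfib⟩
  have hcard : Nat.card {n : ℕ | 1 ≤ n ∧ Nat.fib n ≤ N} = k := by
    rw [hset, Nat.card_coe_set_eq, ← Finset.coe_Icc, Set.ncard_coe_finset, Nat.card_Icc]; omega
  rw [hcard]
  -- now the floor computation
  have hgold1 : (1:ℝ) < Real.goldenRatio := Real.one_lt_goldenRatio
  have hlogphi : 0 < Real.log phi := Real.log_pos (by rw [phi_eq]; exact hgold1)
  have hX : (0:ℝ) < Real.sqrt 5 * ((N : ℝ) + 1 / 2) := by positivity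
  have h1 : Real.goldenRatio ^ k < Real.sqrt 5 * ((N : ℝ) + 1 / 2) := by
    have := fib_close k
    have hfib : (Nat.fib k : ℝ) ≤ N := by exact_mod_cast hkfib
    rw [abs_lt] at this
    have : Real.goldenRatio ^ k / Real.sqrt 5 < (N : ℝ) + 1 / 2 := by linarith
    calc Real.goldenRatio ^ k = (Real.goldenRatio ^ k / Real.sqrt 5) * Real.sqrt 5 :=
            (div_mul_cancel₀ _ h5'.ne').symm
      _ < ((N : ℝ) + 1 / 2) * Real.sqrt 5 := by
            exact mul_lt_mul_of_pos_right this h5'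
      _ = Real.sqrt 5 * ((N : ℝ) + 1 / 2) := by ring
  have h2 : Real.sqrt 5 * ((N : ℝ) + 1 / 2) < Real.goldenRatio ^ (k + 1) := by
    have := fib_close (k + 1)
    have hfib : (N : ℝ) + 1 ≤ (Nat.fib (k+1) : ℝ) := by exact_mod_cast hksucc
    rw [abs_lt] at this
    have : (N : ℝ) + 1 / 2 < Real.goldenRatio ^ (k+1) / Real.sqrt 5 := by linarith
    calc Real.sqrt 5 * ((N : ℝ) + 1 / 2) < Real.sqrt 5 * (Real.goldenRatio ^ (k+1) / Real.sqrt 5) :=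
            mul_lt_mul_of_pos_left this h5'
      _ = Real.goldenRatio ^ (k + 1) := by rw [mul_comm, div_mul_cancel₀ _ h5'.ne']
  symm
  rw [Int.floor_eq_iff]
  constructor
  · rw [le_div_iff₀ hlogphi]
    push_cast
    rw [phi_eq, ← Real.log_pow]
    exact Real.log_le_log (by positivity) h1.le
  · rw [div_lt_iff₀ hlogphi]
    push_cast
    rw [show ((k:ℝ) + 1) = ((k + 1 : ℕ) : ℝ) by push_cast; ring]
    rw [phi_eq, ← Real.log_pow]
    exact Real.log_lt_log hX (by exact_mod_cast h2)
end

section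
/- The real number log φ / log 10 (the base-10 logarithm of the golden ratio) is irrational. -/
lemma phi_pos : 0 < phi := by
  unfold phi
  have := Real.sqrt_nonneg 5
  linarith

lemma phi_sq : phi ^ 2 = phi + 1 := by
  unfold phi
  have h : Real.sqrt 5 ^ 2 = 5 := Real.sq_sqrt (by norm_num)
  ring_nf
  nlinarith [h]

lemma phi_pow_fib (n : ℕ) : phi ^ (n + 1) = Nat.fib (n + 1) * phi + Nat.fib n := by
  induction n with
  | zero => simp
  | succ k ih =>
    have : phi ^ (k + 2) = phi ^ (k + 1) * phi := by ring
    rw [this, ih, Nat.fib_add_two]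
    push_cast
    nlinarith [phi_sq]

lemma phi_irrational : Irrational phi := by
  have h5 : Irrational (Real.sqrt 5) := (by norm_num : Nat.Prime 5).irrational_sqrt
  have h1 : Irrational ((1 : ℚ) + Real.sqrt 5) := h5.ratCast_add 1
  have h2 : Irrational (((1 : ℚ) + Real.sqrt 5) / (2 : ℕ)) := h1.div_natCast (by norm_num)
  unfold phi
  convert h2 using 2 <;> norm_num

/-- The base-10 logarithm of the golden ratio, `log φ / log 10`, is irrational. -/
theorem log_phi_div_log_ten_irrational :
    Irrational (Real.log phi / Real.log 10) := by
  rintro ⟨r, hr⟩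
  have h10 : (0 : ℝ) < Real.log 10 := Real.log_pos (by norm_num)
  have hlog : Real.log phi = r * Real.log 10 := by
    field_simp at hr
    linarith [hr]
  have hphi : phi = (10 : ℝ) ^ (r : ℝ) := by
    rw [Real.rpow_def_of_pos (by norm_num), mul_comm, ← hlog, Real.exp_log phi_pos]
  have hden : (r.den : ℝ) ≠ 0 := by exact_mod_cast r.den_ne_zero 
  have key : phi ^ r.den = (10 : ℝ) ^ (r.num : ℤ) := by
    rw [hphi, ← Real.rpow_natCast ((10 : ℝ) ^ (r : ℝ)) r.den,
      ← Real.rpow_mul (by norm_num), ← Real.rpow_intCast]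
    congr 1
    rw [Rat.cast_def]
    field_simp
  have hne : r.den - 1 + 1 = r.den := Nat.succ_pred_eq_of_pos r.den_pos
  have hirr : Irrational (phi ^ r.den) := by
    rw [← hne, phi_pow_fib]
    exact (phi_irrational.natCast_mul ((Nat.fib_pos.mpr (by omega)).ne')).add_natCast _
  rw [key] at hirr
  have : ¬ Irrational ((10 : ℝ) ^ (r.num : ℤ)) := by
    have : ((10 : ℝ) ^ (r.num : ℤ)) = (((10 : ℚ) ^ (r.num : ℤ) : ℚ) : ℝ) := by push_cast; ring
    rw [this]
    exact Rat.not_irrational _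
  exact this hirr
end

section
/- The leading decimal digits of the Fibonacci numbers obey Benford's law: for each digit d ∈ {1, ..., 9}, the proportion of indices n ∈ {1, ..., N} for which the leading (most significant) decimal digit of F_n equals d tends to log₁₀(1 + 1/d) as N → ∞. -/
open Filter

/-- The leading (most significant) decimal digit of a positive integer:
the last entry of the little-endian base-10 digit list. -/
def leadingDigit (x : ℕ) : ℕ := (Nat.digits 10 x).getLast!

open Finset Real

noncomputable def cnt (α c t ℓ : ℝ) (N : ℕ) : ℕ :=
  ((Finset.Icc 1 N).filter (fun n : ℕ => Int.fract ((n : ℝ) * α + c - t) < ℓ)).card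

lemma fract_small (α : ℝ) (hα : Irrational α) (δ : ℝ) (hδ : 0 < δ) :
    ∃ m : ℕ, 1 ≤ m ∧ (Int.fract (m * α) < δ ∨ 1 - δ < Int.fract (m * α)) := by
  rcases le_or_gt 1 δ with h1 | h1
  · exact ⟨1, le_refl _, Or.inl (lt_of_lt_of_le (Int.fract_lt_one _) h1)⟩
  obtain ⟨n, hn⟩ := exists_nat_gt (1/δ)
  have hn0 : 0 < n := by
    by_contra h
    push_neg at h
    interval_cases n
    simp at hn
    nlinarith [hδ]
  obtain ⟨j, k, hk0, hkn, hjk⟩ := Real.exists_int_int_abs_mul_sub_le α hn0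
  refine ⟨k.toNat, by omega, ?_⟩
  have hkk : ((k.toNat : ℕ) : ℝ) = (k : ℝ) := by
    have := Int.toNat_of_nonneg hk0.le
    exact_mod_cast congrArg (fun z : ℤ => (z : ℝ)) this
  rw [hkk]
  have hlt : |(k:ℝ) * α - j| < δ := by
    have : (1:ℝ)/(n+1) < δ := by
      rw [div_lt_iff₀ (by positivity)]
      rw [div_lt_iff₀ hδ] at hn
      nlinarith
    linarith [hjk]
  have hirr : Irrational ((k:ℝ) * α) := by
    have := hα.intCast_mul hk0.ne'
    rwa [show ((k:ℝ)) * α = ((k:ℤ):ℝ) * α by norm_num] at this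
  have hne : (k:ℝ) * α - j ≠ 0 := sub_ne_zero.2 (hirr.ne_int j)
  set r := (k:ℝ) * α - j with hr
  have hfr : Int.fract ((k:ℝ) * α) = Int.fract r := by
    rw [hr]; rw [sub_eq_add_neg, show -(j:ℝ) = ((-j : ℤ) : ℝ) by push_cast; ring,
      Int.fract_add_intCast]
  rw [hfr]
  rw [abs_lt] at hlt
  rcases lt_or_gt_of_ne hne with hneg | hpos
  · right
    have h2 : Int.fract r = r + 1 := by
      rw [← Int.fract_add_intCast r 1,
        Int.fract_eq_self.2 ⟨by push_cast; linarith, by push_cast; linarith⟩]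
      push_cast; ring
    rw [h2]
    linarith
  · left
    rw [Int.fract_eq_self.2 ⟨hpos.le, by linarith⟩]
    exact hlt.2

lemma exists_nat_fract_mem (α : ℝ) (hα : Irrational α) {u v : ℝ}
    (hu : 0 ≤ u) (huv : u < v) (hv : v ≤ 1) :
    ∃ m : ℕ, 1 ≤ m ∧ u < Int.fract (m * α) ∧ Int.fract (m * α) < v := by
  set δ := (v - u) / 2 with hδdef
  have hδ : 0 < δ := by rw [hδdef]; linarith
  obtain ⟨m₀, hm₀1, hm₀⟩ := fract_small α hα δ hδ
  set θ := Int.fract ((m₀ : ℝ) * α) with hθdef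
  have hθirr : Irrational θ := by
    have h1 : Irrational ((m₀ : ℝ) * α) := by
      have := hα.intCast_mul (show (m₀ : ℤ) ≠ 0 by exact_mod_cast (show 0 < m₀ by omega).ne')
      rwa [show (((m₀ : ℤ) : ℝ)) = (m₀ : ℝ) by push_cast; ring] at this
    exact h1.sub_intCast ⌊(m₀ : ℝ) * α⌋
  have hθne : θ ≠ 0 := fun h => hθirr.ne_int 0 (by rw [h]; norm_num)
  have hθ0 : 0 < θ := (Int.fract_nonneg ((m₀ : ℝ) * α)).lt_of_ne (Ne.symm hθne)
  have hθ1 : θ < 1 := Int.fract_lt_one _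
  have key : ∀ j : ℕ, Int.fract (((j * m₀ : ℕ) : ℝ) * α) = Int.fract ((j : ℝ) * θ) := by
    intro j
    have heq : ((j * m₀ : ℕ) : ℝ) * α = (j : ℝ) * θ + ((j : ℤ) * ⌊(m₀ : ℝ) * α⌋ : ℤ) := by
      have : θ = (m₀ : ℝ) * α - ⌊(m₀ : ℝ) * α⌋ := rfl
      rw [this]; push_cast; ring
    rw [heq, Int.fract_add_intCast]
  rcases hm₀ with hc | hc
  · -- θ < δ : step upward past u
    set j := Nat.floor (u / θ) + 1 with hjdef
    have hj1 : u < (j : ℝ) * θ := by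
      have h2 := Nat.lt_floor_add_one (u / θ)
      rw [div_lt_iff₀ hθ0] at h2
      calc u < (↑(Nat.floor (u / θ)) + 1) * θ := h2
        _ = (j : ℝ) * θ := by rw [hjdef]; push_cast; ring
    have hj2 : (j : ℝ) * θ ≤ u + θ := by
      have h2 := Nat.floor_le (show 0 ≤ u / θ by positivity)
      rw [le_div_iff₀ hθ0] at h2
      rw [hjdef]; push_cast; linarith
    have hlt : (j : ℝ) * θ < v := by rw [hδdef] at hc; linarith
    refine ⟨j * m₀, by rw [hjdef]; exact Nat.one_le_iff_ne_zero.2 (by positivity), ?_, ?_⟩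
    · rw [key j, Int.fract_eq_self.2 ⟨by positivity, by linarith⟩]; exact hj1
    · rw [key j, Int.fract_eq_self.2 ⟨by positivity, by linarith⟩]; exact hlt
  · -- θ > 1 - δ : step downward
    set η := 1 - θ with hηdef
    have hη0 : 0 < η := by rw [hηdef]; linarith
    have hηδ : η < δ := by rw [hηdef]; linarith
    set j := Nat.floor ((1 - v) / η) + 1 with hjdef
    have hj1 : 1 - v < (j : ℝ) * η := by
      have h2 := Nat.lt_floor_add_one ((1 - v) / η)
      rw [div_lt_iff₀ hη0] at h2
      calc 1 - v < (↑(Nat.floor ((1 - v) / η)) + 1) * η := h2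
        _ = (j : ℝ) * η := by rw [hjdef]; push_cast; ring
    have hj2 : (j : ℝ) * η ≤ (1 - v) + η := by
      have h2 := Nat.floor_le (show 0 ≤ (1 - v) / η from div_nonneg (by linarith) hη0.le)
      rw [le_div_iff₀ hη0] at h2
      rw [hjdef]; push_cast; linarith
    have hlt : (j : ℝ) * η < 1 - u := by rw [hδdef] at hηδ; linarith
    have hfr : Int.fract ((j : ℝ) * θ) = 1 - (j : ℝ) * η := by
      have heq : (j : ℝ) * θ = (1 - (j : ℝ) * η) + ((j : ℤ) - 1 : ℤ) := by
        rw [hηdef]; push_cast; ring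
      rw [heq, Int.fract_add_intCast, Int.fract_eq_self.2 ⟨by linarith, by linarith⟩]
    refine ⟨j * m₀, by rw [hjdef]; exact Nat.one_le_iff_ne_zero.2 (by positivity), ?_, ?_⟩
    · rw [key j, hfr]; linarith
    · rw [key j, hfr]; linarith

/-- number of n in [1,N] with fract(nα+c) in the arc [t, t+ℓ) (mod 1). -/
lemma cnt_le_shift (α c t ℓ : ℝ) (N m : ℕ) :
    cnt α c t ℓ N ≤ cnt α c (t + m * α) ℓ N + m := by
  have h1 : cnt α c t ℓ N ≤ cnt α c t ℓ (N - m) + m := by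
    unfold cnt
    have hsub : (Finset.Icc 1 N).filter (fun n : ℕ => Int.fract ((n : ℝ) * α + c - t) < ℓ) ⊆
        ((Finset.Icc 1 (N - m)).filter (fun n : ℕ => Int.fract ((n : ℝ) * α + c - t) < ℓ)) ∪
          Finset.Ioc (N - m) N := by
      intro n hn
      simp only [Finset.mem_filter, Finset.mem_Icc, Finset.mem_union, Finset.mem_Ioc] at *
      obtain ⟨⟨ha, hb⟩, hP⟩ := hn
      by_cases hc : n ≤ N - m
      · exact Or.inl ⟨⟨ha, hc⟩, hP⟩
      · exact Or.inr (by omega)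
    calc _ ≤ _ := Finset.card_le_card hsub
      _ ≤ _ + (Finset.Ioc (N - m) N).card := Finset.card_union_le _ _
      _ ≤ _ + m := by rw [Nat.card_Ioc]; omega
  have h2 : cnt α c t ℓ (N - m) ≤ cnt α c (t + m * α) ℓ N := by
    unfold cnt
    apply Finset.card_le_card_of_injOn (fun n : ℕ => n + m)
    · intro n hn
      simp only [Finset.mem_coe, Finset.mem_filter, Finset.mem_Icc] at *
      refine ⟨by omega, ?_⟩
      have : ((n + m : ℕ) : ℝ) * α + c - (t + m * α) = (n : ℝ) * α + c - t := by
        push_cast; ring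
      rw [this]; exact hn.2
    · intro a _ b _ h
      have h' : a + m = b + m := h
      omega
  omega

lemma cnt_shift_le (α c t ℓ : ℝ) (N m : ℕ) :
    cnt α c (t + m * α) ℓ N ≤ cnt α c t ℓ N + m := by
  have h1 : cnt α c (t + m * α) ℓ N ≤
      ((Finset.Icc (m + 1) N).filter
        (fun n : ℕ => Int.fract ((n : ℝ) * α + c - (t + m * α)) < ℓ)).card + m := by
    unfold cnt
    have hsub : (Finset.Icc 1 N).filter (fun n : ℕ => Int.fract ((n : ℝ) * α + c - (t + m * α)) < ℓ) ⊆
        ((Finset.Icc (m + 1) N).filter (fun n : ℕ => Int.fract ((n : ℝ) * α + c - (t + m * α)) < ℓ)) ∪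
          Finset.Icc 1 m := by
      intro n hn
      simp only [Finset.mem_filter, Finset.mem_Icc, Finset.mem_union] at *
      obtain ⟨⟨ha, hb⟩, hP⟩ := hn
      by_cases hc : m + 1 ≤ n
      · exact Or.inl ⟨⟨hc, hb⟩, hP⟩
      · exact Or.inr (by omega)
    calc _ ≤ _ := Finset.card_le_card hsub
      _ ≤ _ + (Finset.Icc 1 m).card := Finset.card_union_le _ _
      _ ≤ _ + m := by rw [Nat.card_Icc]; omega
  have h2 : ((Finset.Icc (m + 1) N).filter
      (fun n : ℕ => Int.fract ((n : ℝ) * α + c - (t + m * α)) < ℓ)).card ≤ cnt α c t ℓ N := by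
    unfold cnt
    apply Finset.card_le_card_of_injOn (fun n : ℕ => n - m)
    · intro n hn
      simp only [Finset.mem_coe, Finset.mem_filter, Finset.mem_Icc] at *
      refine ⟨by omega, ?_⟩
      have hmn : m ≤ n := by omega
      have hcast : ((n - m : ℕ) : ℝ) = (n : ℝ) - m := by
        exact Nat.cast_sub hmn
      have : ((n - m : ℕ) : ℝ) * α + c - t = (n : ℝ) * α + c - (t + m * α) := by
        rw [hcast]; ring
      rw [this]; exact hn.2
    · intro a ha b hb h
      simp only [Finset.coe_filter, Set.mem_setOf_eq, Finset.mem_Icc] at ha hb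
      have h' : a - m = b - m := h
      omega
  omega

lemma cnt_one (α c t : ℝ) (N : ℕ) : cnt α c t 1 N = N := by
  unfold cnt
  rw [Finset.filter_true_of_mem (fun n _ => Int.fract_lt_one _), Nat.card_Icc]
  omega

lemma fract_arc_split (x t ℓ₁ ℓ₂ : ℝ) (h1 : 0 ≤ ℓ₁) (h2 : 0 ≤ ℓ₂) (h12 : ℓ₁ + ℓ₂ ≤ 1) :
    (Int.fract (x - t) < ℓ₁ + ℓ₂ ↔
      (Int.fract (x - t) < ℓ₁ ∨ Int.fract (x - (t + ℓ₁)) < ℓ₂)) ∧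
    ¬(Int.fract (x - t) < ℓ₁ ∧ Int.fract (x - (t + ℓ₁)) < ℓ₂) := by
  set y := Int.fract (x - t) with hy
  have hy0 : 0 ≤ y := Int.fract_nonneg _
  have hy1 : y < 1 := Int.fract_lt_one _
  have key : Int.fract (x - (t + ℓ₁)) = if ℓ₁ ≤ y then y - ℓ₁ else y - ℓ₁ + 1 := by
    have harg : x - (t + ℓ₁) = (y - ℓ₁) + (⌊x - t⌋ : ℤ) := by
      rw [hy]; unfold Int.fract; ring
    rw [harg, Int.fract_add_intCast]
    split_ifs with hc
    · exact Int.fract_eq_self.2 ⟨by linarith, by linarith⟩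
    · push_neg at hc
      rw [← Int.fract_add_intCast (y - ℓ₁) 1, Int.fract_eq_self.2 ⟨by push_cast; linarith,
        by push_cast; linarith⟩]
      push_cast; ring
  rw [key]
  split_ifs with hc
  · constructor
    · constructor
      · intro h; exact Or.inr (by linarith)
      · rintro (h | h) <;> linarith
    · rintro ⟨h1', _⟩; linarith
  · push_neg at hc
    constructor
    · constructor
      · intro h; exact Or.inl hc
      · rintro (h | h) <;> linarith
    · rintro ⟨_, h2'⟩; linarith

lemma cnt_split (α c t ℓ₁ ℓ₂ : ℝ) (N : ℕ) (h1 : 0 ≤ ℓ₁) (h2 : 0 ≤ ℓ₂) (h12 : ℓ₁ + ℓ₂ ≤ 1) :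
    cnt α c t (ℓ₁ + ℓ₂) N = cnt α c t ℓ₁ N + cnt α c (t + ℓ₁) ℓ₂ N := by
  unfold cnt
  have hiff : ∀ n ∈ Finset.Icc 1 N,
      (Int.fract ((n : ℝ) * α + c - t) < ℓ₁ + ℓ₂) =
      ((Int.fract ((n : ℝ) * α + c - t) < ℓ₁) ∨
        (Int.fract ((n : ℝ) * α + c - (t + ℓ₁)) < ℓ₂)) := by
    intro n _
    exact propext (fract_arc_split ((n : ℝ) * α + c) t ℓ₁ ℓ₂ h1 h2 h12).1
  rw [Finset.filter_congr (fun n hn => by rw [hiff n hn]), Finset.filter_or,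
    Finset.card_union_of_disjoint]
  rw [Finset.disjoint_filter]
  intro n _ hp hq
  exact (fract_arc_split ((n : ℝ) * α + c) t ℓ₁ ℓ₂ h1 h2 h12).2 ⟨hp, hq⟩

lemma cnt_pieces (α c : ℝ) (s : ℝ) (hs : 0 ≤ s) (j : ℕ) (t : ℝ) (hj : (j : ℝ) * s ≤ 1)
    (N : ℕ) :
    cnt α c t ((j : ℝ) * s) N = ∑ i ∈ Finset.range j, cnt α c (t + i * s) s N := by
  induction j generalizing t with
  | zero =>
    simp only [Nat.cast_zero, zero_mul, Finset.range_zero, Finset.sum_empty]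
    unfold cnt
    rw [Finset.filter_false_of_mem, Finset.card_empty]
    intro n _
    exact fun h => absurd h (not_lt.2 (Int.fract_nonneg _))
  | succ j ih =>
    have hj' : (j : ℝ) * s ≤ 1 := by
      have : (j : ℝ) * s ≤ (j + 1 : ℝ) * s := by nlinarith
      push_cast at hj ⊢; linarith
    have hsplit := cnt_split α c t ((j : ℝ) * s) s N (by positivity) hs
      (by push_cast at hj ⊢; linarith)
    have : ((j + 1 : ℕ) : ℝ) * s = (j : ℝ) * s + s := by push_cast; ring
    rw [this, hsplit, ih t hj', Finset.sum_range_succ]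

-- H1: arc starting point can be moved close (from above) to any target
lemma exists_fract_add_lt (α : ℝ) (hα : Irrational α) (r δ : ℝ) (hδ : 0 < δ) :
    ∃ m : ℕ, 1 ≤ m ∧ Int.fract ((m : ℝ) * α + r) < δ := by
  set σ := Int.fract (-r) with hσ
  have hσ0 : 0 ≤ σ := Int.fract_nonneg _
  have hσ1 : σ < 1 := Int.fract_lt_one _
  obtain ⟨m, hm1, hmu, hmv⟩ := exists_nat_fract_mem α hα (u := σ) (v := min (σ + δ) 1)
    hσ0 (lt_min (by linarith) hσ1) (min_le_right _ _)
  refine ⟨m, hm1, ?_⟩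
  have harg : (m : ℝ) * α + r = (Int.fract ((m : ℝ) * α) - σ) + ((⌊(m : ℝ) * α⌋ - ⌊-r⌋ : ℤ)) := by
    rw [hσ]; unfold Int.fract; push_cast; ring
  rw [harg, Int.fract_add_intCast, Int.fract_eq_self.2 ⟨by linarith, by
    have := min_le_right (σ + δ) 1; have := lt_min_iff.1 (lt_of_lt_of_le hmv (le_refl _)); linarith [this.2]⟩]
  have := lt_min_iff.1 hmv
  linarith [this.1]

-- H2: arc starting point can be moved close (from below)
lemma exists_fract_sub_lt (α : ℝ) (hα : Irrational α) (r δ : ℝ) (hδ : 0 < δ) :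
    ∃ m : ℕ, 1 ≤ m ∧ Int.fract (r - (m : ℝ) * α) < δ := by
  set σ := Int.fract r with hσ
  have hσ0 : 0 ≤ σ := Int.fract_nonneg _
  have hσ1 : σ < 1 := Int.fract_lt_one _
  rcases eq_or_lt_of_le hσ0 with h0 | h0
  · -- σ = 0 : r is an integer, use fract(mα) close to 1
    obtain ⟨m, hm1, hmu, hmv⟩ := exists_nat_fract_mem α hα (u := max (1 - δ) 0)
      (v := 1) (le_max_right _ _) (max_lt (by linarith) one_pos) le_rfl
    refine ⟨m, hm1, ?_⟩
    have harg : r - (m : ℝ) * α =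
        (1 - Int.fract ((m : ℝ) * α)) + ((⌊r⌋ - ⌊(m : ℝ) * α⌋ - 1 : ℤ)) := by
      have hfr : Int.fract r = r - ⌊r⌋ := rfl
      have hr : r = (⌊r⌋ : ℝ) := by
        have h0' : Int.fract r = 0 := by rw [← hσ, ← h0]
        rw [h0'] at hfr
        linarith
      unfold Int.fract; push_cast
      linarith [hr]
    have h1m : 0 < Int.fract ((m : ℝ) * α) := lt_of_le_of_lt (le_max_right _ _) hmu
    rw [harg, Int.fract_add_intCast, Int.fract_eq_self.2 ⟨by linarith, by linarith⟩]
    have h2 : 1 - δ < Int.fract ((m : ℝ) * α) := lt_of_le_of_lt (le_max_left _ _) hmu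
    linarith
  · -- σ > 0 : pick fract(mα) just below σ
    obtain ⟨m, hm1, hmu, hmv⟩ := exists_nat_fract_mem α hα (u := max (σ - δ) 0)
      (v := σ) (le_max_right _ _) (max_lt (by linarith) h0) hσ1.le
    refine ⟨m, hm1, ?_⟩
    have harg : r - (m : ℝ) * α =
        (σ - Int.fract ((m : ℝ) * α)) + ((⌊r⌋ - ⌊(m : ℝ) * α⌋ : ℤ)) := by
      rw [hσ]; unfold Int.fract; push_cast; ring
    have h2 : σ - δ < Int.fract ((m : ℝ) * α) := lt_of_le_of_lt (le_max_left _ _) hmu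
    have h3 : 0 ≤ Int.fract ((m : ℝ) * α) := Int.fract_nonneg _
    rw [harg, Int.fract_add_intCast, Int.fract_eq_self.2 ⟨by linarith, by linarith⟩]
    linarith

-- monotonicity in ℓ
lemma cnt_mono (α c t : ℝ) {ℓ ℓ' : ℝ} (h : ℓ ≤ ℓ') (N : ℕ) :
    cnt α c t ℓ N ≤ cnt α c t ℓ' N := by
  apply Finset.card_le_card
  intro n hn
  simp only [Finset.mem_filter] at *
  exact ⟨hn.1, lt_of_lt_of_le hn.2 h⟩

-- if the arc [t',t'+ℓ) is inside [t'', t''+ℓ'') in the sense fract(t'-t'') + ℓ ≤ ℓ'', counts compare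
lemma cnt_arc_subset (α c : ℝ) (t' t'' ℓ ℓ'' : ℝ) (h : Int.fract (t' - t'') + ℓ ≤ ℓ'')
    (N : ℕ) : cnt α c t' ℓ N ≤ cnt α c t'' ℓ'' N := by
  apply Finset.card_le_card
  intro n hn
  simp only [Finset.mem_filter] at *
  refine ⟨hn.1, ?_⟩
  replace hn := hn.2
  have key : Int.fract ((n : ℝ) * α + c - t'') ≤
      Int.fract ((n : ℝ) * α + c - t') + Int.fract (t' - t'') := by
    have : (n : ℝ) * α + c - t'' = ((n : ℝ) * α + c - t') + (t' - t'') := by ring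
    rw [this]; exact Int.fract_add_le _ _
  linarith

/-- Key upper estimate -/
lemma cnt_upper (α : ℝ) (hα : Irrational α) (c t ℓ : ℝ) (k : ℕ) (hk : 1 ≤ k)
    (hℓ0 : 0 < ℓ) (hℓ : ℓ < 1 / k) :
    ∃ C : ℕ, ∀ N, k * cnt α c t ℓ N ≤ N + C := by
  have hk0 : (0 : ℝ) < k := by exact_mod_cast hk
  have hδ : 0 < 1 / (k : ℝ) - ℓ := by linarith
  -- choose shifts
  have hch : ∀ j : ℕ, ∃ m : ℕ, 1 ≤ m ∧
      Int.fract ((m : ℝ) * α + (t - j / k)) < 1 / k - ℓ := fun j =>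
    exists_fract_add_lt α hα (t - j / k) _ hδ
  choose m hm1 hm2 using hch
  refine ⟨∑ j ∈ Finset.range k, m j, fun N => ?_⟩
  have hstep : ∀ j ∈ Finset.range k,
      cnt α c t ℓ N ≤ cnt α c ((j : ℝ) / k) (1 / k) N + m j := by
    intro j _
    calc cnt α c t ℓ N ≤ cnt α c (t + (m j) * α) ℓ N + m j := cnt_le_shift α c t ℓ N (m j)
      _ ≤ cnt α c ((j : ℝ) / k) (1 / k) N + m j := by
          gcongr
          apply cnt_arc_subset
          have : t + (m j : ℝ) * α - (j : ℝ) / k = (m j : ℝ) * α + (t - j / k) := by ring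
          rw [this]
          linarith [hm2 j]
  have hsum : ∑ j ∈ Finset.range k, cnt α c ((j : ℝ) / k) (1 / k) N = N := by
    have h1 : ((k : ℝ)) * (1 / k) = 1 := by field_simp
    have hpieces := cnt_pieces α c (1 / k) (by positivity) k 0 (by rw [h1]) N
    simp only [zero_add] at hpieces
    rw [Finset.sum_congr rfl (fun i (_ : i ∈ Finset.range k) =>
      show cnt α c ((i : ℝ) * (1 / k)) (1 / k) N = cnt α c ((i : ℝ) / k) (1 / k) N by
        congr 1; ring)] at hpieces
    rw [h1, cnt_one] at hpieces
    exact hpieces.symm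
  calc k * cnt α c t ℓ N = ∑ _j ∈ Finset.range k, cnt α c t ℓ N := by
        rw [Finset.sum_const, Finset.card_range, smul_eq_mul]
    _ ≤ ∑ j ∈ Finset.range k, (cnt α c ((j : ℝ) / k) (1 / k) N + m j) :=
        Finset.sum_le_sum hstep
    _ = N + ∑ j ∈ Finset.range k, m j := by rw [Finset.sum_add_distrib, hsum]

/-- Key lower estimate -/
lemma cnt_lower (α : ℝ) (hα : Irrational α) (c t ℓ : ℝ) (k : ℕ) (hk : 1 ≤ k)
    (hℓ : 1 / (k : ℝ) < ℓ) (hℓ1 : ℓ ≤ 1) :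
    ∃ C : ℕ, ∀ N, N ≤ k * cnt α c t ℓ N + C := by
  have hk0 : (0 : ℝ) < k := by exact_mod_cast hk
  have hδ : 0 < ℓ - 1 / (k : ℝ) := by linarith
  have hch : ∀ j : ℕ, ∃ m : ℕ, 1 ≤ m ∧
      Int.fract ((j / k - t) - (m : ℝ) * α) < ℓ - 1 / k := fun j =>
    exists_fract_sub_lt α hα ((j : ℝ) / k - t) _ hδ
  choose m hm1 hm2 using hch
  refine ⟨∑ j ∈ Finset.range k, m j, fun N => ?_⟩
  have hstep : ∀ j ∈ Finset.range k,
      cnt α c ((j : ℝ) / k) (1 / k) N ≤ cnt α c t ℓ N + m j := by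
    intro j _
    calc cnt α c ((j : ℝ) / k) (1 / k) N ≤ cnt α c (t + (m j) * α) ℓ N := by
          apply cnt_arc_subset
          have : (j : ℝ) / k - (t + (m j : ℝ) * α) = ((j : ℝ) / k - t) - (m j : ℝ) * α := by ring
          rw [this]
          linarith [hm2 j]
      _ ≤ cnt α c t ℓ N + m j := cnt_shift_le α c t ℓ N (m j)
  have hsum : ∑ j ∈ Finset.range k, cnt α c ((j : ℝ) / k) (1 / k) N = N := by
    have h1 : ((k : ℝ)) * (1 / k) = 1 := by field_simp
    have hpieces := cnt_pieces α c (1 / k) (by positivity) k 0 (by rw [h1]) N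
    simp only [zero_add] at hpieces
    rw [Finset.sum_congr rfl (fun i (_ : i ∈ Finset.range k) =>
      show cnt α c ((i : ℝ) * (1 / k)) (1 / k) N = cnt α c ((i : ℝ) / k) (1 / k) N by
        congr 1; ring)] at hpieces
    rw [h1, cnt_one] at hpieces
    exact hpieces.symm
  calc (N : ℕ) = ∑ j ∈ Finset.range k, cnt α c ((j : ℝ) / k) (1 / k) N := hsum.symm
    _ ≤ ∑ j ∈ Finset.range k, (cnt α c t ℓ N + m j) := Finset.sum_le_sum hstep
    _ = k * cnt α c t ℓ N + ∑ j ∈ Finset.range k, m j := by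
        rw [Finset.sum_add_distrib, Finset.sum_const, Finset.card_range, smul_eq_mul]

lemma cnt_freq_upper (α : ℝ) (hα : Irrational α) (c t ℓ : ℝ) (hℓ0 : 0 < ℓ) (hℓ1 : ℓ ≤ 1)
    (ε : ℝ) (hε : 0 < ε) :
    ∀ᶠ N in atTop, (cnt α c t ℓ N : ℝ) / N < ℓ + ε := by
  obtain ⟨k, hkgt⟩ := exists_nat_gt (2 / ε)
  have hk2ε : 2 / ε < (k : ℝ) := hkgt
  have hk0 : (0 : ℝ) < k := lt_trans (by positivity) hkgt
  have hk1 : 1 ≤ k := by exact_mod_cast Nat.one_le_cast.2 (by exact_mod_cast Nat.pos_of_ne_zero (by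
    intro h; rw [h] at hk0; simp at hk0))
  have hinvk : 1 / (k : ℝ) < ε / 2 := by
    rw [div_lt_div_iff₀ hk0 (by norm_num : (0:ℝ) < 2)] at *
    rw [div_lt_iff₀ hε] at hk2ε
    nlinarith
  set j := Nat.floor (ℓ * k) + 1 with hjdef
  have hj1 : 1 ≤ j := by omega
  have hjℝ : (j : ℝ) = (Nat.floor (ℓ * k) : ℝ) + 1 := by rw [hjdef]; push_cast; ring
  have hℓj : ℓ * k < j := by rw [hjℝ]; exact Nat.lt_floor_add_one _
  have hjℓ : (j : ℝ) ≤ ℓ * k + 1 := by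
    rw [hjℝ]
    have := Nat.floor_le (show 0 ≤ ℓ * k by positivity)
    linarith
  set s := ℓ / j with hsdef
  have hj0 : (0 : ℝ) < j := by exact_mod_cast hj1
  have hs0 : 0 < s := by rw [hsdef]; positivity
  have hsk : s < 1 / k := by
    rw [hsdef, div_lt_div_iff₀ hj0 hk0]
    linarith
  have hjs : (j : ℝ) * s = ℓ := by rw [hsdef]; field_simp
  choose C hC using fun i : ℕ => cnt_upper α hα c (t + i * s) s k hk1 hs0 hsk
  set Ct := ∑ i ∈ Finset.range j, C i with hCt
  have hkey : ∀ N, k * cnt α c t ℓ N ≤ j * N + Ct := by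
    intro N
    have h1 : cnt α c t ℓ N = ∑ i ∈ Finset.range j, cnt α c (t + i * s) s N := by
      have hp := cnt_pieces α c s hs0.le j t (by rw [hjs]; exact hℓ1) N
      rwa [hjs] at hp
    calc k * cnt α c t ℓ N = ∑ i ∈ Finset.range j, k * cnt α c (t + i * s) s N := by
          rw [h1, Finset.mul_sum]
      _ ≤ ∑ i ∈ Finset.range j, (N + C i) := Finset.sum_le_sum (fun i _ => hC i N)
      _ = j * N + Ct := by rw [Finset.sum_add_distrib, Finset.sum_const, Finset.card_range,
            smul_eq_mul, hCt]
  -- now cast and take limits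
  have hlim : Tendsto (fun N : ℕ => (Ct : ℝ) / ((k : ℝ) * N)) atTop (nhds 0) := by
    have : (fun N : ℕ => (Ct : ℝ) / ((k : ℝ) * N)) = fun N : ℕ => ((Ct : ℝ) / k) / N := by
      funext N; rw [div_div]
    rw [this]
    exact tendsto_const_div_atTop_nhds_zero_nat _
  have hev := hlim.eventually (gt_mem_nhds (show (0:ℝ) < ε/2 by linarith))
  filter_upwards [hev, eventually_ge_atTop 1] with N hN1 hN2
  have hN0 : (0 : ℝ) < N := by exact_mod_cast hN2
  have hcast : (k : ℝ) * (cnt α c t ℓ N : ℝ) ≤ (j : ℝ) * N + Ct := by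
    exact_mod_cast hkey N
  have hfreq : (cnt α c t ℓ N : ℝ) / N ≤ (j : ℝ) / k + (Ct : ℝ) / (k * N) := by
    have e1 : (cnt α c t ℓ N : ℝ) / N = ((k : ℝ) * cnt α c t ℓ N) / ((k : ℝ) * N) := by
      rw [mul_div_mul_left _ _ (ne_of_gt hk0)]
    have e2 : ((j : ℝ) * N + Ct) / ((k : ℝ) * N) = (j : ℝ) / k + (Ct : ℝ) / (k * N) := by
      field_simp
    rw [e1, ← e2, div_le_div_iff₀ (by positivity) (by positivity)]
    have := mul_le_mul_of_nonneg_right hcast (show (0:ℝ) ≤ (k : ℝ) * N by positivity)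
    linarith
  have hjk : (j : ℝ) / k ≤ ℓ + 1 / k := by
    rw [div_le_iff₀ hk0]
    have : (ℓ + 1 / k) * k = ℓ * k + 1 := by field_simp
    rw [this]; exact hjℓ
  calc (cnt α c t ℓ N : ℝ) / N ≤ (j : ℝ) / k + (Ct : ℝ) / (k * N) := hfreq
    _ < (ℓ + 1 / k) + ε / 2 := by linarith [hN1]
    _ < ℓ + ε := by linarith [hinvk]

lemma cnt_freq_lower (α : ℝ) (hα : Irrational α) (c t ℓ : ℝ) (hℓ0 : 0 < ℓ) (hℓ1 : ℓ ≤ 1)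
    (ε : ℝ) (hε : 0 < ε) :
    ∀ᶠ N in atTop, ℓ - ε < (cnt α c t ℓ N : ℝ) / N := by
  obtain ⟨k, hkgt⟩ := exists_nat_gt (max (2 / ε) (2 / ℓ))
  have hk2ε : 2 / ε < (k : ℝ) := lt_of_le_of_lt (le_max_left _ _) hkgt
  have hk2ℓ : 2 / ℓ < (k : ℝ) := lt_of_le_of_lt (le_max_right _ _) hkgt
  have hk0 : (0 : ℝ) < k := lt_trans (by positivity) hk2ε
  have hk1 : 1 ≤ k := by
    by_contra h
    push_neg at h
    interval_cases k
    simp at hk0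
  have hinvk : 1 / (k : ℝ) < ε / 2 := by
    rw [div_lt_iff₀ hε] at hk2ε
    rw [div_lt_div_iff₀ hk0 (by norm_num : (0:ℝ) < 2)]
    nlinarith
  have hℓk : 2 < ℓ * k := by
    rw [div_lt_iff₀ hℓ0] at hk2ℓ
    nlinarith
  set j := Nat.ceil (ℓ * (k : ℝ)) - 1 with hjdef
  have hceil2 : 2 ≤ Nat.ceil (ℓ * (k : ℝ)) := by
    by_contra h
    push_neg at h
    have h1 : ((Nat.ceil (ℓ * (k : ℝ)) : ℕ) : ℝ) ≤ 1 := by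
      exact_mod_cast Nat.lt_succ_iff.mp h
    linarith [Nat.le_ceil (ℓ * (k : ℝ))]
  have hj1 : 1 ≤ j := by omega
  have hjℝ : (j : ℝ) = (Nat.ceil (ℓ * (k : ℝ)) : ℝ) - 1 := by
    rw [hjdef, Nat.cast_sub (by omega)]; push_cast; ring
  have hℓj : (j : ℝ) < ℓ * k := by
    rw [hjℝ]
    have := Nat.ceil_lt_add_one (show 0 ≤ ℓ * (k : ℝ) by positivity)
    linarith
  have hjℓ : ℓ * k - 1 ≤ (j : ℝ) := by
    rw [hjℝ]
    linarith [Nat.le_ceil (ℓ * (k : ℝ))]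
  set s := ℓ / j with hsdef
  have hj0 : (0 : ℝ) < j := by exact_mod_cast hj1
  have hs0 : 0 < s := by rw [hsdef]; positivity
  have hsk : 1 / (k : ℝ) < s := by
    rw [hsdef, div_lt_div_iff₀ hk0 hj0]
    linarith
  have hs1 : s ≤ 1 := by
    rw [hsdef, div_le_one hj0]
    calc ℓ ≤ 1 := hℓ1
      _ ≤ (j : ℝ) := by exact_mod_cast hj1
  have hjs : (j : ℝ) * s = ℓ := by rw [hsdef]; field_simp
  choose C hC using fun i : ℕ => cnt_lower α hα c (t + i * s) s k hk1 hsk hs1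
  set Ct := ∑ i ∈ Finset.range j, C i with hCt
  have hkey : ∀ N, j * N ≤ k * cnt α c t ℓ N + Ct := by
    intro N
    have h1 : cnt α c t ℓ N = ∑ i ∈ Finset.range j, cnt α c (t + i * s) s N := by
      have hp := cnt_pieces α c s hs0.le j t (by rw [hjs]; exact hℓ1) N
      rwa [hjs] at hp
    calc j * N = ∑ _i ∈ Finset.range j, N := by
          rw [Finset.sum_const, Finset.card_range, smul_eq_mul]
      _ ≤ ∑ i ∈ Finset.range j, (k * cnt α c (t + i * s) s N + C i) :=
          Finset.sum_le_sum (fun i _ => hC i N)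
      _ = k * cnt α c t ℓ N + Ct := by
          rw [Finset.sum_add_distrib, ← Finset.mul_sum, ← h1, hCt]
  have hlim : Tendsto (fun N : ℕ => (Ct : ℝ) / ((k : ℝ) * N)) atTop (nhds 0) := by
    have : (fun N : ℕ => (Ct : ℝ) / ((k : ℝ) * N)) = fun N : ℕ => ((Ct : ℝ) / k) / N := by
      funext N; rw [div_div]
    rw [this]
    exact tendsto_const_div_atTop_nhds_zero_nat _
  have hev := hlim.eventually (gt_mem_nhds (show (0:ℝ) < ε/2 by linarith))
  filter_upwards [hev, eventually_ge_atTop 1] with N hN1 hN2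
  have hN0 : (0 : ℝ) < N := by exact_mod_cast hN2
  have hcast : (j : ℝ) * N ≤ (k : ℝ) * (cnt α c t ℓ N : ℝ) + Ct := by
    exact_mod_cast hkey N
  have hfreq : (j : ℝ) / k - (Ct : ℝ) / (k * N) ≤ (cnt α c t ℓ N : ℝ) / N := by
    have e1 : (cnt α c t ℓ N : ℝ) / N = ((k : ℝ) * cnt α c t ℓ N) / ((k : ℝ) * N) := by
      rw [mul_div_mul_left _ _ (ne_of_gt hk0)]
    have e2 : ((j : ℝ) * N - Ct) / ((k : ℝ) * N) = (j : ℝ) / k - (Ct : ℝ) / (k * N) := by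
      field_simp
    rw [e1, ← e2, div_le_div_iff₀ (by positivity) (by positivity)]
    have := mul_le_mul_of_nonneg_right (show (j : ℝ) * N - Ct ≤ (k : ℝ) * cnt α c t ℓ N by linarith)
      (show (0:ℝ) ≤ (k : ℝ) * N by positivity)
    linarith
  have hjk : ℓ - 1 / k ≤ (j : ℝ) / k := by
    rw [le_div_iff₀ hk0]
    have : (ℓ - 1 / k) * k = ℓ * k - 1 := by field_simp
    rw [this]; exact hjℓ
  calc ℓ - ε < (ℓ - 1 / k) - ε / 2 := by linarith [hinvk]
    _ ≤ (j : ℝ) / k - (Ct : ℝ) / (k * N) := by linarith [hN1]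
    _ ≤ (cnt α c t ℓ N : ℝ) / N := hfreq

theorem cnt_tendsto (α : ℝ) (hα : Irrational α) (c t ℓ : ℝ) (hℓ0 : 0 < ℓ) (hℓ1 : ℓ ≤ 1) :
    Tendsto (fun N : ℕ => (cnt α c t ℓ N : ℝ) / N) atTop (nhds ℓ) := by
  rw [Metric.tendsto_atTop]
  intro ε hε
  have h1 := cnt_freq_upper α hα c t ℓ hℓ0 hℓ1 ε hε
  have h2 := cnt_freq_lower α hα c t ℓ hℓ0 hℓ1 ε hε
  obtain ⟨N₀, hN₀⟩ := (h1.and h2).exists_forall_of_atTop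
  exact ⟨N₀, fun n hn => by
    rw [Real.dist_eq, abs_lt]
    obtain ⟨ha, hb⟩ := hN₀ n hn
    constructor <;> linarith⟩

lemma getLast!_cons_of_ne_nil {l : List ℕ} (h : l ≠ []) (a : ℕ) :
    (a :: l).getLast! = l.getLast! := by
  cases l with
  | nil => contradiction
  | cons b t => rw [List.getLast!_cons_eq_getLastD, List.getLast!_cons_eq_getLastD, List.getLastD_cons]

lemma leadingDigit_eq_div_pow (x : ℕ) (hx : 1 ≤ x) :
    leadingDigit x = x / 10 ^ (Nat.log 10 x) := by
  induction x using Nat.strong_induction_on with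
  | _ x ih =>
    rcases lt_or_ge x 10 with h | h
    · have hlog : Nat.log 10 x = 0 := Nat.log_of_lt h
      rw [hlog, pow_zero, Nat.div_one]
      unfold leadingDigit
      rw [Nat.digits_def' (by norm_num : 1 < 10) (by omega : 0 < x)]
      have : x / 10 = 0 := Nat.div_eq_of_lt h
      rw [this]
      simp [Nat.mod_eq_of_lt h, List.getLast!_cons_eq_getLastD]
    · have hx10 : 1 ≤ x / 10 := (Nat.one_le_div_iff (by norm_num)).2 h
      have hlt : x / 10 < x := Nat.div_lt_self (by omega) (by norm_num)
      have hstep : leadingDigit x = leadingDigit (x / 10) := by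
        unfold leadingDigit
        rw [Nat.digits_def' (by norm_num : 1 < 10) (by omega : 0 < x)]
        exact getLast!_cons_of_ne_nil (Nat.digits_ne_nil_iff_ne_zero.2 (by omega)) _
      have hlog : Nat.log 10 x = Nat.log 10 (x / 10) + 1 := by
        rw [Nat.log_div_base]
        have : 0 < Nat.log 10 x := Nat.log_pos (by norm_num) h
        omega
      rw [hstep, ih (x / 10) hlt hx10, hlog, pow_succ]
      rw [Nat.div_div_eq_div_mul]
      ring_nf

lemma leadingDigit_iff_fract_logb (x d : ℕ) (hx : 1 ≤ x) (hd1 : 1 ≤ d) (hd9 : d ≤ 9) :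
    leadingDigit x = d ↔
      Real.logb 10 d ≤ Int.fract (Real.logb 10 x) ∧
        Int.fract (Real.logb 10 x) < Real.logb 10 (d + 1) := by
  set k := Nat.log 10 x with hk
  have hk1 : (10 : ℕ) ^ k ≤ x := Nat.pow_log_le_self 10 (by omega)
  have hk2 : x < 10 ^ (k + 1) := Nat.lt_pow_succ_log_self (by norm_num) x
  have hx0 : (0 : ℝ) < (x : ℝ) := by exact_mod_cast hx
  have h10 : (1 : ℝ) < 10 := by norm_num
  have hlogpow : ∀ n : ℕ, Real.logb 10 ((10 : ℝ) ^ n) = n := by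
    intro n
    rw [Real.logb_pow, Real.logb_self_eq_one (by norm_num : (1:ℝ) < 10), mul_one]
  -- fract (logb 10 x) = logb 10 x - k
  have hfloor : (k : ℝ) ≤ Real.logb 10 x ∧ Real.logb 10 x < (k : ℝ) + 1 := by
    constructor
    · rw [← hlogpow k]
      apply (Real.logb_le_logb (by norm_num : (1:ℝ) < 10) (by positivity) hx0).2
      exact_mod_cast hk1
    · rw [show ((k : ℝ) + 1) = Real.logb 10 ((10 : ℝ) ^ (k + 1)) by rw [hlogpow]; push_cast; ring]
      apply (Real.logb_lt_logb_iff (b := 10) (by norm_num) hx0 (by positivity)).2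
      exact_mod_cast hk2
  have hfract : Int.fract (Real.logb 10 x) = Real.logb 10 x - k := by
    rw [Int.fract]
    congr 1
    rw [show ((k : ℝ)) = ((k : ℤ) : ℝ) by push_cast; ring] at hfloor ⊢
    norm_cast
    rw [Int.floor_eq_iff]
    constructor
    · exact hfloor.1
    · push_cast; exact hfloor.2
  have hdiv : leadingDigit x = d ↔ d * 10 ^ k ≤ x ∧ x < (d + 1) * 10 ^ k := by
    have hp0 : 0 < 10 ^ k := Nat.pow_pos (by norm_num)
    rw [leadingDigit_eq_div_pow x hx, ← hk]
    constructor
    · intro h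
      exact ⟨(Nat.le_div_iff_mul_le hp0).1 (le_of_eq h.symm),
        (Nat.div_lt_iff_lt_mul hp0).1 (h ▸ Nat.lt_succ_self d)⟩
    · rintro ⟨h1, h2⟩
      have ha : d ≤ x / 10 ^ k := (Nat.le_div_iff_mul_le hp0).2 h1
      have hb : x / 10 ^ k < d + 1 := (Nat.div_lt_iff_lt_mul hp0).2 h2
      omega
  rw [hdiv, hfract]
  have hda : (0 : ℝ) < (d : ℝ) := by exact_mod_cast hd1
  have hp : (0 : ℝ) < (10 : ℝ) ^ k := by positivity
  constructor
  · rintro ⟨h1, h2⟩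
    constructor
    · have : Real.logb 10 ((d : ℝ) * 10 ^ k) ≤ Real.logb 10 x := by
        apply (Real.logb_le_logb (by norm_num : (1:ℝ) < 10) (by positivity) hx0).2
        exact_mod_cast h1
      rw [Real.logb_mul (by positivity) (by positivity), hlogpow] at this
      linarith
    · have : Real.logb 10 x < Real.logb 10 (((d : ℝ) + 1) * 10 ^ k) := by
        apply (Real.logb_lt_logb_iff (b := 10) (by norm_num) hx0 (by positivity)).2
        exact_mod_cast h2
      rw [Real.logb_mul (by positivity) (by positivity), hlogpow] at this
      push_cast
      linarith
  · rintro ⟨h1, h2⟩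
    constructor
    · have : Real.logb 10 ((d : ℝ) * 10 ^ k) ≤ Real.logb 10 x := by
        rw [Real.logb_mul (by positivity) (by positivity), hlogpow]
        linarith
      have := (Real.logb_le_logb (by norm_num : (1:ℝ) < 10) (by positivity) hx0).1 this
      exact_mod_cast this
    · have : Real.logb 10 x < Real.logb 10 (((d : ℝ) + 1) * 10 ^ k) := by
        rw [Real.logb_mul (by positivity) (by positivity), hlogpow]
        push_cast at h2 ⊢
        linarith
      have := (Real.logb_lt_logb_iff (b := 10) (by norm_num) hx0 (by positivity)).1 this
      exact_mod_cast this

lemma logb_gold_irrational : Irrational (Real.logb 10 goldenRatio) := by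
  rw [Irrational]
  rintro ⟨q, hq⟩
  have hφ1 : 1 < goldenRatio := one_lt_goldenRatio
  have hαpos : 0 < Real.logb 10 goldenRatio := Real.logb_pos (by norm_num) hφ1
  have hq0 : 0 < q := by
    have : (0 : ℝ) < (q : ℝ) := by rw [hq]; exact hαpos
    exact_mod_cast this
  -- q = num / den
  have hden : (0 : ℝ) < (q.den : ℝ) := by exact_mod_cast q.pos
  have hnum : 0 < q.num := Rat.num_pos.2 hq0
  set n := q.num.toNat with hn
  have hn1 : 1 ≤ n := by omega
  have hnn : ((n : ℕ) : ℝ) = (q.num : ℝ) := by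
    rw [hn]; exact_mod_cast congrArg (fun z : ℤ => (z : ℝ)) (Int.toNat_of_nonneg hnum.le)
  -- den * log φ = num * log 10
  have hkey : (q.den : ℝ) * Real.log goldenRatio = (n : ℝ) * Real.log 10 := by
    have h1 : (q : ℝ) = (q.num : ℝ) / (q.den : ℝ) := Rat.cast_def q
    have h2 : Real.logb 10 goldenRatio = Real.log goldenRatio / Real.log 10 := rfl
    rw [h2, h1] at hq
    have hlog10 : (0 : ℝ) < Real.log 10 := Real.log_pos (by norm_num)
    field_simp at hq
    rw [hnn]
    linarith [hq]
  -- φ ^ den = 10 ^ n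
  have hpow : goldenRatio ^ q.den = (10 : ℝ) ^ n := by
    have h1 : Real.log (goldenRatio ^ q.den) = Real.log ((10 : ℝ) ^ n) := by
      rw [Real.log_pow, Real.log_pow]
      exact_mod_cast hkey
    have h2 : (0 : ℝ) < goldenRatio ^ q.den := pow_pos goldenRatio_pos _
    have h3 : (0 : ℝ) < (10 : ℝ) ^ n := by positivity
    exact Real.log_injOn_pos (Set.mem_Ioi.2 h2) (Set.mem_Ioi.2 h3) h1
  -- φ ^ den = fib den * φ + fib (den - 1)
  obtain ⟨m, hm⟩ : ∃ m, q.den = m + 1 := ⟨q.den - 1, by have := q.pos; omega⟩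
  have hfib := goldenRatio_mul_fib_succ_add_fib m
  rw [hm] at hpow
  -- so φ is rational
  have hfibpos : 0 < Nat.fib (m + 1) := Nat.fib_pos.2 (by omega)
  apply goldenRatio_irrational
  refine ⟨((10 : ℚ) ^ n - (Nat.fib m : ℚ)) / (Nat.fib (m + 1) : ℚ), ?_⟩
  have hfibne : ((Nat.fib (m + 1) : ℚ) : ℝ) ≠ 0 := by
    push_cast
    exact_mod_cast Nat.cast_pos.2 hfibpos |>.ne'
  push_cast
  rw [div_eq_iff (by exact_mod_cast hfibne)]
  have : goldenRatio * (Nat.fib (m + 1) : ℝ) = (10 : ℝ) ^ n - Nat.fib m := by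
    rw [← hpow, ← hfib]; ring
  linarith [this]

lemma abs_ratio_lt_one : |goldenConj / goldenRatio| < 1 := by
  rw [abs_div, abs_of_pos goldenRatio_pos, div_lt_one goldenRatio_pos]
  calc |goldenConj| < 1 := abs_lt.2 ⟨neg_one_lt_goldenConj, by linarith [goldenConj_neg]⟩
    _ < goldenRatio := one_lt_goldenRatio

lemma one_sub_ratio_pow_pos (n : ℕ) (hn : 1 ≤ n) :
    0 < 1 - (goldenConj / goldenRatio) ^ n := by
  have h1 : |(goldenConj / goldenRatio) ^ n| < 1 := by
    rw [abs_pow]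
    exact pow_lt_one₀ (abs_nonneg _) abs_ratio_lt_one (by omega)
  have := abs_lt.1 h1
  linarith [this.2]

lemma logb_fib_eq (n : ℕ) (hn : 1 ≤ n) :
    Real.logb 10 (Nat.fib n) =
      (n : ℝ) * Real.logb 10 goldenRatio + (-(Real.logb 10 (Real.sqrt 5))) +
        Real.logb 10 (1 - (goldenConj / goldenRatio) ^ n) := by
  have h5 : (0 : ℝ) < Real.sqrt 5 := Real.sqrt_pos.2 (by norm_num)
  have hφn : (0 : ℝ) < goldenRatio ^ n := pow_pos goldenRatio_pos n
  have hr := one_sub_ratio_pow_pos n hn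
  have hfib : (Nat.fib n : ℝ) = goldenRatio ^ n * (1 - (goldenConj / goldenRatio) ^ n) /
      Real.sqrt 5 := by
    rw [Real.coe_fib_eq]
    congr 1
    have hne : goldenRatio ^ n ≠ 0 := pow_ne_zero n goldenRatio_ne_zero
    have hq : goldenRatio * (goldenConj / goldenRatio) = goldenConj := by
      rw [mul_div_assoc', mul_comm, mul_div_assoc, div_self goldenRatio_ne_zero, mul_one]
    rw [mul_sub, mul_one, ← mul_pow, hq]
  rw [hfib, Real.logb_div (by positivity) (by positivity),
    Real.logb_mul (by positivity) (by positivity), Real.logb_pow]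
  ring

lemma EE_tendsto : Tendsto (fun n : ℕ => Real.logb 10 (1 - (goldenConj / goldenRatio) ^ n))
    atTop (nhds 0) := by
  have h1 : Tendsto (fun n : ℕ => (goldenConj / goldenRatio) ^ n) atTop (nhds 0) :=
    tendsto_pow_atTop_nhds_zero_of_abs_lt_one abs_ratio_lt_one
  have h2 : Tendsto (fun n : ℕ => 1 - (goldenConj / goldenRatio) ^ n) atTop (nhds 1) := by
    have := (tendsto_const_nhds (x := (1:ℝ)) (f := atTop)).sub h1
    simpa using this
  have h3 : ContinuousAt (Real.logb 10) 1 := by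
    unfold Real.logb
    exact (Real.continuousAt_log one_ne_zero).div_const _
  have h4 := h3.tendsto.comp h2
  rw [Real.logb_one] at h4
  exact h4

lemma fract_mem_arc_iff (y a b : ℝ) (h0 : 0 ≤ a) (ha1 : a ≤ 1) (hb : b ≤ 1) :
    (a ≤ Int.fract y ∧ Int.fract y < b) ↔ Int.fract (y - a) < b - a := by
  set z := Int.fract y with hz
  have hz0 : 0 ≤ z := Int.fract_nonneg _
  have hz1 : z < 1 := Int.fract_lt_one _
  have hfr : Int.fract (y - a) = Int.fract (z - a) := by
    have : y - a = (z - a) + (⌊y⌋ : ℤ) := by rw [hz]; unfold Int.fract; push_cast; ring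
    rw [this, Int.fract_add_intCast]
  rw [hfr]
  rcases le_or_gt a z with hc | hc
  · rw [Int.fract_eq_self.2 ⟨by linarith, by linarith⟩]
    constructor
    · rintro ⟨_, h⟩; linarith
    · intro h; exact ⟨hc, by linarith⟩
  · have : Int.fract (z - a) = z - a + 1 := by
      rw [← Int.fract_add_intCast (z - a) 1, Int.fract_eq_self.2 ⟨by push_cast; linarith [h0, ha1],
        by push_cast; linarith⟩]
      push_cast; ring
    rw [this]
    constructor
    · rintro ⟨h, _⟩; linarith
    · intro h; exfalso; linarith

/-- Benford's law for Fibonacci numbers: for each digit `d ∈ {1, …, 9}`, the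
proportion of `n ∈ {1, …, N}` whose leading decimal digit of `F n` equals `d`
tends to `log₁₀(1 + 1/d)` as `N → ∞`. -/
theorem fib_benford (d : ℕ) (hd1 : 1 ≤ d) (hd9 : d ≤ 9) :
    Tendsto
      (fun N : ℕ =>
        (((Finset.Icc 1 N).filter fun n => leadingDigit (Nat.fib n) = d).card : ℝ) / (N : ℝ))
      atTop (nhds (Real.logb 10 (1 + 1 / (d : ℝ)))) := by
  set α := Real.logb 10 goldenRatio with hαdef
  set c := -(Real.logb 10 (Real.sqrt 5)) with hcdef
  have hα := logb_gold_irrational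
  have hd0 : (0 : ℝ) < (d : ℝ) := by exact_mod_cast hd1
  set a := Real.logb 10 (d : ℝ) with hadef
  set b := Real.logb 10 ((d : ℝ) + 1) with hbdef
  set ℓ := b - a with hℓdef
  have h110 : (1 : ℝ) < 10 := by norm_num
  have ha0 : 0 ≤ a := Real.logb_nonneg h110 (by exact_mod_cast hd1)
  have hab : a < b := Real.logb_lt_logb h110 hd0 (by linarith)
  have hb1 : b ≤ 1 := by
    have hd9' : (d : ℝ) ≤ 9 := by exact_mod_cast hd9
    have h2 : b ≤ Real.logb 10 10 :=
      (Real.logb_le_logb h110 (by linarith) (by norm_num)).2 (by linarith)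
    rwa [Real.logb_self_eq_one h110] at h2
  have ha1 : a ≤ 1 := by linarith
  have hℓ0 : 0 < ℓ := by rw [hℓdef]; linarith
  have htarget : Real.logb 10 (1 + 1 / (d : ℝ)) = ℓ := by
    rw [hℓdef, hadef, hbdef, ← Real.logb_div (by linarith) (by linarith)]
    congr 1
    field_simp
  have hℓ1 : ℓ < 1 := by
    have hd' : 1 / (d : ℝ) ≤ 1 := by
      rw [div_le_one hd0]; exact_mod_cast hd1
    have h2 : Real.logb 10 (1 + 1 / (d : ℝ)) < Real.logb 10 10 :=
      Real.logb_lt_logb h110 (by positivity) (by linarith)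
    rw [Real.logb_self_eq_one h110] at h2
    rw [← htarget]
    exact h2
  rw [htarget, Metric.tendsto_atTop]
  intro ε hε
  set δ := min (ε / 8) (min ((1 - ℓ) / 2) (ℓ / 8)) with hδdef
  have hδ0 : 0 < δ := by
    apply lt_min (by linarith)
    apply lt_min (by linarith) (by linarith)
  have hδε : δ ≤ ε / 8 := min_le_left _ _
  have hδℓ1 : 2 * δ ≤ 1 - ℓ := by
    have := (min_le_right (ε / 8) _).trans (min_le_left ((1 - ℓ) / 2) (ℓ / 8))
    linarith
  have hδℓ : 8 * δ ≤ ℓ := by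
    have := (min_le_right (ε / 8) _).trans (min_le_right ((1 - ℓ) / 2) (ℓ / 8))
    linarith
  -- error bound index
  obtain ⟨n₀, hn₀⟩ := (Metric.tendsto_atTop.1 EE_tendsto) δ hδ0
  simp only [Real.dist_eq, sub_zero] at hn₀
  -- the two reference counts
  have hU := cnt_tendsto α hα c (a - δ) (ℓ + 2 * δ) (by linarith) (by linarith)
  have hV := cnt_tendsto α hα c (a + 2 * δ) (ℓ - 4 * δ) (by linarith) (by linarith)
  have hUev := hU.eventually (Metric.ball_mem_nhds (ℓ + 2 * δ) hδ0)
  have hVev := hV.eventually (Metric.ball_mem_nhds (ℓ - 4 * δ) hδ0)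
  have hn₀N : Tendsto (fun N : ℕ => (n₀ : ℝ) / N) atTop (nhds 0) :=
    tendsto_const_div_atTop_nhds_zero_nat _
  have hn₀ev := hn₀N.eventually (gt_mem_nhds hδ0)
  rw [eventually_atTop] at hUev hVev hn₀ev
  obtain ⟨N₁, hN₁⟩ := hUev
  obtain ⟨N₂, hN₂⟩ := hVev
  obtain ⟨N₃, hN₃⟩ := hn₀ev
  refine ⟨max (max N₁ N₂) (max N₃ 1), fun N hN => ?_⟩
  have hNN₁ : N ≥ N₁ := le_trans (le_max_left _ _ |>.trans (le_max_left _ _)) hN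
  have hNN₂ : N ≥ N₂ := le_trans (le_max_right _ _ |>.trans (le_max_left _ _)) hN
  have hNN₃ : N ≥ N₃ := le_trans (le_max_left _ _ |>.trans (le_max_right _ _)) hN
  have hN1 : 1 ≤ N := le_trans (le_max_right _ _ |>.trans (le_max_right _ _)) hN
  have hN0 : (0 : ℝ) < N := by exact_mod_cast hN1
  -- key pointwise facts
  have hmain : ∀ n : ℕ, 1 ≤ n → n₀ ≤ n →
      ((leadingDigit (Nat.fib n) = d → Int.fract ((n : ℝ) * α + c - (a - δ)) < ℓ + 2 * δ) ∧
       (Int.fract ((n : ℝ) * α + c - (a + 2 * δ)) < ℓ - 4 * δ → leadingDigit (Nat.fib n) = d)) := by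
    intro n hn1 hnn₀
    have hfib1 : 1 ≤ Nat.fib n := Nat.fib_pos.2 (by omega)
    have hE := hn₀ n hnn₀
    set E := Real.logb 10 (1 - (goldenConj / goldenRatio) ^ n) with hEdef
    have hL : Real.logb 10 (Nat.fib n) = (n : ℝ) * α + c + E := logb_fib_eq n hn1
    have hiff : leadingDigit (Nat.fib n) = d ↔
        Int.fract (Real.logb 10 (Nat.fib n) - a) < ℓ := by
      rw [leadingDigit_iff_fract_logb (Nat.fib n) d hfib1 hd1 hd9]
      push_cast
      rw [fract_mem_arc_iff _ a b ha0 ha1 hb1, ← hℓdef]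
    have habs := abs_lt.1 hE
    constructor
    · intro hT
      rw [hiff] at hT
      have harg : (n : ℝ) * α + c - (a - δ) =
          (Real.logb 10 (Nat.fib n) - a) + (δ - E) := by rw [hL]; ring
      have hfr2 : Int.fract (δ - E) = δ - E :=
        Int.fract_eq_self.2 ⟨by linarith, by linarith⟩
      calc Int.fract ((n : ℝ) * α + c - (a - δ)) ≤
            Int.fract (Real.logb 10 (Nat.fib n) - a) + Int.fract (δ - E) := by
              rw [harg]; exact Int.fract_add_le _ _
        _ < ℓ + 2 * δ := by rw [hfr2]; linarith
    · intro hP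
      rw [hiff]
      set w := Int.fract ((n : ℝ) * α + c - (a + 2 * δ)) with hw
      have hw0 : 0 ≤ w := Int.fract_nonneg _
      have harg : Real.logb 10 (Nat.fib n) - a =
          (w + 2 * δ + E) + (⌊(n : ℝ) * α + c - (a + 2 * δ)⌋ : ℤ) := by
        rw [hL, hw]; unfold Int.fract; push_cast; ring
      rw [harg, Int.fract_add_intCast, Int.fract_eq_self.2 ⟨by linarith, by linarith⟩]
      linarith
  -- counting inequalities
  set T := ((Finset.Icc 1 N).filter fun n => leadingDigit (Nat.fib n) = d).card with hT
  have hTU : T ≤ cnt α c (a - δ) (ℓ + 2 * δ) N + n₀ := by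
    have hsub : (Finset.Icc 1 N).filter (fun n => leadingDigit (Nat.fib n) = d) ⊆
        ((Finset.Icc 1 N).filter
          (fun n : ℕ => Int.fract ((n : ℝ) * α + c - (a - δ)) < ℓ + 2 * δ)) ∪
          Finset.Icc 1 n₀ := by
      intro n hn
      simp only [Finset.mem_filter, Finset.mem_Icc, Finset.mem_union] at *
      by_cases hc : n₀ ≤ n
      · exact Or.inl ⟨hn.1, (hmain n hn.1.1 hc).1 hn.2⟩
      · exact Or.inr ⟨hn.1.1, by omega⟩
    have hrfl : ((Finset.Icc 1 N).filter
        (fun n : ℕ => Int.fract ((n : ℝ) * α + c - (a - δ)) < ℓ + 2 * δ)).card =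
        cnt α c (a - δ) (ℓ + 2 * δ) N := rfl
    calc T ≤ _ := Finset.card_le_card hsub
      _ ≤ _ + (Finset.Icc 1 n₀).card := Finset.card_union_le _ _
      _ ≤ cnt α c (a - δ) (ℓ + 2 * δ) N + n₀ := by rw [hrfl, Nat.card_Icc]; omega
  have hVT : cnt α c (a + 2 * δ) (ℓ - 4 * δ) N ≤ T + n₀ := by
    have hsub : (Finset.Icc 1 N).filter
        (fun n : ℕ => Int.fract ((n : ℝ) * α + c - (a + 2 * δ)) < ℓ - 4 * δ) ⊆
        ((Finset.Icc 1 N).filter (fun n => leadingDigit (Nat.fib n) = d)) ∪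
          Finset.Icc 1 n₀ := by
      intro n hn
      simp only [Finset.mem_filter, Finset.mem_Icc, Finset.mem_union] at *
      by_cases hc : n₀ ≤ n
      · exact Or.inl ⟨hn.1, (hmain n hn.1.1 hc).2 hn.2⟩
      · exact Or.inr ⟨hn.1.1, by omega⟩
    have hrfl : cnt α c (a + 2 * δ) (ℓ - 4 * δ) N = ((Finset.Icc 1 N).filter
        (fun n : ℕ => Int.fract ((n : ℝ) * α + c - (a + 2 * δ)) < ℓ - 4 * δ)).card := rfl
    calc cnt α c (a + 2 * δ) (ℓ - 4 * δ) N = _ := hrfl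
      _ ≤ _ := Finset.card_le_card hsub
      _ ≤ _ + (Finset.Icc 1 n₀).card := Finset.card_union_le _ _
      _ ≤ T + n₀ := by rw [Nat.card_Icc]; omega
  -- put it together
  have hUb := hN₁ N hNN₁
  have hVb := hN₂ N hNN₂
  have hn₀b := hN₃ N hNN₃
  rw [Real.dist_eq, abs_lt] at hUb hVb
  set U := cnt α c (a - δ) (ℓ + 2 * δ) N with hUdef
  set V := cnt α c (a + 2 * δ) (ℓ - 4 * δ) N with hVdef
  have hcastTU : (T : ℝ) ≤ (U : ℝ) + (n₀ : ℝ) := by exact_mod_cast hTU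
  have hcastVT : (V : ℝ) ≤ (T : ℝ) + (n₀ : ℝ) := by exact_mod_cast hVT
  have hF1 : (T : ℝ) / N ≤ (U : ℝ) / N + (n₀ : ℝ) / N := by
    rw [← add_div]
    gcongr
  have hF2 : (V : ℝ) / N ≤ (T : ℝ) / N + (n₀ : ℝ) / N := by
    rw [← add_div]
    gcongr
  rw [Real.dist_eq, abs_lt]
  constructor
  · have h1 : (V : ℝ) / N > ℓ - 5 * δ := by linarith [hVb.1]
    have h2 : (T : ℝ) / N ≥ (V : ℝ) / N - (n₀ : ℝ) / N := by linarith
    have h3 : (T : ℝ) / N > ℓ - 6 * δ := by linarith [hn₀b]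
    linarith
  · have h1 : (U : ℝ) / N < ℓ + 3 * δ := by linarith [hUb.2]
    have h3 : (T : ℝ) / N < ℓ + 4 * δ := by linarith [hn₀b]
    linarith
end

section
/- Normality criterion for concatenations (Pollack–Vandehey): let b ≥ 2 be an integer base and (a_n)_{n≥1} a sequence of positive integers such that, as m → ∞: (i) m / (∑_{n=1}^{m} ℓ_b(a_n)) → 0; (ii) there exists C > 0 with m · max_{1 ≤ n ≤ m} ℓ_b(a_n) ≤ C · ∑_{n=1}^{m} ℓ_b(a_n) for all m; and (iii) for every ε > 0 and every integer k ≥ 1, the number of indices n ≤ m for which a_n is not (ε,k)-normal in base b is o(m). Then the infinite digit sequence S obtained by concatenating the base-b digit strings of a_1, a_2, a_3, ... is normal in base b. -/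
open Filter

open scoped Classical

/-- Number of base-`b` digits of `x`. -/
def digLen (b x : ℕ) : ℕ := (Nat.digits b x).length

/-- The base-`b` digit string of `x`, most significant digit first. -/
def digStr (b x : ℕ) : List ℕ := (Nat.digits b x).reverse

/-- `occ w s` : the number of sliding-window occurrences of the word `w`
in the digit string `s`, i.e. indices `i` with `0 ≤ i ≤ |s| - |w|` such that
`w` occurs in `s` starting at position `i`. -/
def occ (w s : List ℕ) : ℕ :=
  ((List.range (s.length + 1 - w.length)).filter
    fun i => (s.drop i).take w.length = w).length

/-- A positive integer `x` is `(ε,k)`-normal in base `b` if every word `w` of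
length `k` over `{0, …, b-1}` occurs in the base-`b` digit string of `x` with
frequency within `ε` of `b⁻ᵏ`. -/
def EpsKNormal (b : ℕ) (ε : ℝ) (k x : ℕ) : Prop :=
  ∀ w : List ℕ, w.length = k → (∀ d ∈ w, d < b) →
    |(occ w (digStr b x) : ℝ) / (digLen b x : ℝ) - ((b : ℝ) ^ k)⁻¹| ≤ ε

/-- The concatenation of the base-`b` digit strings of `a 1, a 2, …, a m`. -/
def concatPrefix (b : ℕ) (a : ℕ → ℕ) (m : ℕ) : List ℕ :=
  (List.range m).flatMap fun n => digStr b (a (n + 1))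

/-- The infinite digit sequence obtained by concatenating the base-`b` digit
strings of `a 1, a 2, a 3, …` (provided each `a n` for `n ≥ 1` is positive,
the prefix of the first `i + 1` strings has length `> i`, so the `i`-th digit
is well defined). -/
def concatStream (b : ℕ) (a : ℕ → ℕ) (i : ℕ) : ℕ :=
  (concatPrefix b a (i + 1)).getD i 0

/-- An infinite digit sequence `s` is normal in base `b` if every word `w` of
length `k ≥ 1` over `{0, …, b-1}` occurs as a block in `s` with asymptotic
frequency `b⁻ᵏ`. -/
def StreamNormal (b : ℕ) (s : ℕ → ℕ) : Prop :=
  ∀ k : ℕ, 1 ≤ k → ∀ w : List ℕ, w.length = k → (∀ d ∈ w, d < b) →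
    Tendsto
      (fun M : ℕ =>
        (((Finset.range M).filter
            fun i => (List.range k).map (fun j => s (i + j)) = w).card : ℝ) / (M : ℝ))
      atTop (nhds (((b : ℝ) ^ k)⁻¹))

/-! ### Auxiliary lemmas -/

lemma occ_eq_card (w s : List ℕ) :
    occ w s = ((Finset.range (s.length + 1 - w.length)).filter
      (fun i => (s.drop i).take w.length = w)).card := rfl

lemma drop_take_append_left {s t : List ℕ} {k i : ℕ} (h : i + k ≤ s.length) :
    ((s ++ t).drop i).take k = (s.drop i).take k := by
  rw [List.drop_append, List.take_append]
  have h1 : i - s.length = 0 := by omega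
  have h2 : k - (s.drop i).length = 0 := by simp; omega
  simp [h1, h2]
  exact Or.inl (by omega)

lemma drop_append_right {s t : List ℕ} {j : ℕ} :
    (s ++ t).drop (s.length + j) = t.drop j := by
  simp [List.drop_append]

lemma occ_le_length {w s : List ℕ} (hw : 1 ≤ w.length) : occ w s ≤ s.length := by
  rw [occ_eq_card]
  calc ((Finset.range (s.length + 1 - w.length)).filter _).card
      ≤ (Finset.range (s.length + 1 - w.length)).card := Finset.card_filter_le _ _
    _ ≤ s.length := by rw [Finset.card_range]; omega

lemma occ_append_ge (w s t : List ℕ) (hw : 1 ≤ w.length) :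
    occ w s + occ w t ≤ occ w (s ++ t) := by
  classical
  set k := w.length with hk
  rw [occ_eq_card, occ_eq_card, occ_eq_card]
  set A := (Finset.range (s.length + 1 - k)).filter (fun i => (s.drop i).take k = w) with hA
  set B := (Finset.range (t.length + 1 - k)).filter (fun i => (t.drop i).take k = w) with hB
  set Cs := (Finset.range ((s ++ t).length + 1 - k)).filter
      (fun i => ((s ++ t).drop i).take k = w) with hC
  have hmap : (A ∪ B.image (fun j => s.length + j)) ⊆ Cs := by
    intro i hi
    rcases Finset.mem_union.1 hi with hi | hi
    · rw [hA, Finset.mem_filter, Finset.mem_range] at hi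
      obtain ⟨hi1, hi2⟩ := hi
      rw [hC, Finset.mem_filter, Finset.mem_range]
      have hik : i + k ≤ s.length := by omega
      refine ⟨by simp; omega, ?_⟩
      rw [drop_take_append_left hik, hi2]
    · rw [Finset.mem_image] at hi
      obtain ⟨j, hj, rfl⟩ := hi
      rw [hB, Finset.mem_filter, Finset.mem_range] at hj
      obtain ⟨hj1, hj2⟩ := hj
      rw [hC, Finset.mem_filter, Finset.mem_range]
      refine ⟨by simp; omega, ?_⟩
      rw [drop_append_right, hj2]
  have hdisj : Disjoint A (B.image (fun j => s.length + j)) := by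
    rw [Finset.disjoint_left]
    intro i hiA hiB
    rw [hA, Finset.mem_filter, Finset.mem_range] at hiA
    rw [Finset.mem_image] at hiB
    obtain ⟨j, hj, rfl⟩ := hiB
    omega
  calc A.card + B.card
      = A.card + (B.image (fun j => s.length + j)).card := by
        rw [Finset.card_image_of_injective _ (fun x y h => by omega)]
    _ = (A ∪ B.image (fun j => s.length + j)).card := (Finset.card_union_of_disjoint hdisj).symm
    _ ≤ Cs.card := Finset.card_le_card hmap

lemma occ_append_le (w s t : List ℕ) (hw : 1 ≤ w.length) :
    occ w (s ++ t) ≤ occ w s + occ w t + w.length := by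
  classical
  set k := w.length with hk
  rw [occ_eq_card, occ_eq_card, occ_eq_card]
  set A := (Finset.range (s.length + 1 - k)).filter (fun i => (s.drop i).take k = w) with hA
  set B := (Finset.range (t.length + 1 - k)).filter (fun i => (t.drop i).take k = w) with hB
  set Cs := (Finset.range ((s ++ t).length + 1 - k)).filter
      (fun i => ((s ++ t).drop i).take k = w) with hC
  have hsub : Cs ⊆ A ∪ B.image (fun j => s.length + j) ∪ Finset.Ico (s.length + 1 - k) s.length := by
    intro i hi
    rw [hC, Finset.mem_filter, Finset.mem_range] at hi
    obtain ⟨hi1, hi2⟩ := hi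
    simp only [List.length_append] at hi1
    rcases le_or_gt (i + k) s.length with hik | hik
    · refine Finset.mem_union_left _ (Finset.mem_union_left _ ?_)
      rw [hA, Finset.mem_filter, Finset.mem_range]
      exact ⟨by omega, by rw [← drop_take_append_left hik, hi2]⟩
    · rcases le_or_gt s.length i with hsi | hsi
      · refine Finset.mem_union_left _ (Finset.mem_union_right _ ?_)
        rw [Finset.mem_image]
        refine ⟨i - s.length, ?_, by omega⟩
        rw [hB, Finset.mem_filter, Finset.mem_range]
        have heq : s.length + (i - s.length) = i := by omega
        refine ⟨by omega, ?_⟩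
        rw [← drop_append_right (s := s) (t := t) (j := i - s.length), heq, hi2]
      · exact Finset.mem_union_right _ (Finset.mem_Ico.2 ⟨by omega, hsi⟩)
  calc Cs.card ≤ (A ∪ B.image (fun j => s.length + j) ∪ Finset.Ico (s.length + 1 - k) s.length).card :=
        Finset.card_le_card hsub
    _ ≤ (A ∪ B.image (fun j => s.length + j)).card + (Finset.Ico (s.length + 1 - k) s.length).card :=
        Finset.card_union_le _ _
    _ ≤ (A.card + (B.image (fun j => s.length + j)).card) + (Finset.Ico (s.length + 1 - k) s.length).card :=
        Nat.add_le_add_right (Finset.card_union_le _ _) _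
    _ ≤ A.card + B.card + k := by
        rw [Finset.card_image_of_injective _ (fun x y h => by omega), Nat.card_Ico]
        omega

lemma digLen_pos {b x : ℕ} (hb : 2 ≤ b) (hx : 0 < x) : 0 < digLen b x := by
  rw [digLen, List.length_pos_iff]
  exact Nat.digits_ne_nil_iff_ne_zero.2 (by omega)

lemma length_digStr (b x : ℕ) : (digStr b x).length = digLen b x := by
  simp [digStr, digLen]

lemma concatPrefix_succ (b : ℕ) (a : ℕ → ℕ) (m : ℕ) :
    concatPrefix b a (m + 1) = concatPrefix b a m ++ digStr b (a (m + 1)) := by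
  rw [concatPrefix, concatPrefix, List.range_succ, List.flatMap_append]
  simp

lemma length_concatPrefix (b : ℕ) (a : ℕ → ℕ) (m : ℕ) :
    (concatPrefix b a m).length = ∑ n ∈ Finset.Icc 1 m, digLen b (a n) := by
  induction m with
  | zero => simp [concatPrefix]
  | succ m ih =>
    rw [concatPrefix_succ, List.length_append, ih, length_digStr]
    rw [Finset.sum_Icc_succ_top (by omega)]

lemma concatPrefix_prefix (b : ℕ) (a : ℕ → ℕ) {m m' : ℕ} (h : m ≤ m') :
    concatPrefix b a m <+: concatPrefix b a m' := by
  induction m' with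
  | zero => rw [Nat.le_zero.1 h]
  | succ m' ih =>
    rcases Nat.lt_or_ge m (m' + 1) with h' | h'
    · refine (ih (by omega)).trans ?_
      rw [concatPrefix_succ]
      exact List.prefix_append _ _
    · have : m = m' + 1 := by omega
      rw [this]

lemma self_le_length_concatPrefix {b : ℕ} (hb : 2 ≤ b) {a : ℕ → ℕ}
    (ha : ∀ n : ℕ, 1 ≤ n → 0 < a n) (m : ℕ) : m ≤ (concatPrefix b a m).length := by
  rw [length_concatPrefix]
  calc m = ∑ n ∈ Finset.Icc 1 m, 1 := by simp
    _ ≤ _ := Finset.sum_le_sum fun n hn =>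
        digLen_pos hb (ha n (Finset.mem_Icc.1 hn).1)

lemma concatStream_eq_getD {b : ℕ} (hb : 2 ≤ b) {a : ℕ → ℕ}
    (ha : ∀ n : ℕ, 1 ≤ n → 0 < a n) {i m : ℕ} (h : i < (concatPrefix b a m).length) :
    concatStream b a i = (concatPrefix b a m).getD i 0 := by
  have hi1 : i < (concatPrefix b a (i + 1)).length :=
    lt_of_lt_of_le (Nat.lt_succ_self i) (self_le_length_concatPrefix hb ha (i + 1))
  rw [concatStream]
  rcases le_total (i + 1) m with hm | hm
  · obtain ⟨r, hr⟩ := concatPrefix_prefix b a hm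
    rw [← hr, List.getD_append _ _ _ _ hi1]
  · obtain ⟨r, hr⟩ := concatPrefix_prefix b a hm
    rw [← hr, List.getD_append _ _ _ _ h]

lemma window_eq {b : ℕ} (hb : 2 ≤ b) {a : ℕ → ℕ}
    (ha : ∀ n : ℕ, 1 ≤ n → 0 < a n) {i k m : ℕ}
    (h : i + k ≤ (concatPrefix b a m).length) :
    (List.range k).map (fun j => concatStream b a (i + j)) =
      ((concatPrefix b a m).drop i).take k := by
  apply List.ext_getElem
  · simp; omega
  · intro j hj1 hj2
    simp only [List.getElem_map, List.getElem_range, List.getElem_take, List.getElem_drop]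
    have hlt : i + j < (concatPrefix b a m).length := by
      simp at hj1; omega
    rw [concatStream_eq_getD hb ha hlt, List.getD_eq_getElem _ _ hlt]

lemma sum_occ_le_occ_concatPrefix (b : ℕ) (a : ℕ → ℕ) (w : List ℕ) (hw : 1 ≤ w.length)
    (m : ℕ) :
    ∑ n ∈ Finset.range m, occ w (digStr b (a (n + 1))) ≤ occ w (concatPrefix b a m) := by
  induction m with
  | zero => simp
  | succ m ih =>
    rw [Finset.sum_range_succ, concatPrefix_succ]
    exact le_trans (Nat.add_le_add_right ih _) (occ_append_ge _ _ _ hw)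

lemma occ_concatPrefix_le_sum (b : ℕ) (a : ℕ → ℕ) (w : List ℕ) (hw : 1 ≤ w.length)
    (m : ℕ) :
    occ w (concatPrefix b a m) ≤
      (∑ n ∈ Finset.range m, occ w (digStr b (a (n + 1)))) + w.length * m := by
  induction m with
  | zero =>
    have h0 : 1 - w.length = 0 := by omega
    simp [concatPrefix, occ, h0]
  | succ m ih =>
    rw [Finset.sum_range_succ, concatPrefix_succ, Nat.mul_succ]
    calc occ w (concatPrefix b a m ++ digStr b (a (m + 1)))
        ≤ occ w (concatPrefix b a m) + occ w (digStr b (a (m + 1))) + w.length :=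
          occ_append_le _ _ _ hw
      _ ≤ _ := by omega

/-- The number of window-occurrences of `w` among the first `M` positions of the stream. -/
noncomputable def F (b : ℕ) (a : ℕ → ℕ) (k : ℕ) (w : List ℕ) (M : ℕ) : ℕ :=
  ((Finset.range M).filter
    fun i => (List.range k).map (fun j => concatStream b a (i + j)) = w).card

lemma occ_le_F {b : ℕ} (hb : 2 ≤ b) {a : ℕ → ℕ} (ha : ∀ n : ℕ, 1 ≤ n → 0 < a n)
    {k : ℕ} (hk : 1 ≤ k) {w : List ℕ} (hwk : w.length = k) {m M : ℕ}
    (hM : (concatPrefix b a m).length ≤ M) :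
    occ w (concatPrefix b a m) ≤ F b a k w M := by
  rw [occ_eq_card, F]
  apply Finset.card_le_card
  intro i hi
  rw [Finset.mem_filter, Finset.mem_range, hwk] at hi
  obtain ⟨hi1, hi2⟩ := hi
  rw [Finset.mem_filter, Finset.mem_range]
  have hik : i + k ≤ (concatPrefix b a m).length := by omega
  exact ⟨by omega, by rw [window_eq hb ha hik, hi2]⟩

lemma F_le_occ_add {b : ℕ} (hb : 2 ≤ b) {a : ℕ → ℕ} (ha : ∀ n : ℕ, 1 ≤ n → 0 < a n)
    {k : ℕ} (hk : 1 ≤ k) {w : List ℕ} (hwk : w.length = k) {m M : ℕ}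
    (hM : M ≤ (concatPrefix b a m).length) (hkL : k ≤ (concatPrefix b a m).length) :
    F b a k w M ≤ occ w (concatPrefix b a m) + k := by
  rw [occ_eq_card, F, hwk]
  set L := (concatPrefix b a m).length with hL
  have hsub : (Finset.range M).filter
      (fun i => (List.range k).map (fun j => concatStream b a (i + j)) = w) ⊆
      ((Finset.range (L + 1 - k)).filter
        (fun i => ((concatPrefix b a m).drop i).take k = w)) ∪ Finset.Ico (L + 1 - k) M := by
    intro i hi
    rw [Finset.mem_filter, Finset.mem_range] at hi
    obtain ⟨hi1, hi2⟩ := hi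
    rcases le_or_gt (i + k) L with hik | hik
    · refine Finset.mem_union_left _ ?_
      rw [Finset.mem_filter, Finset.mem_range]
      exact ⟨by omega, by rw [← window_eq hb ha hik, hi2]⟩
    · exact Finset.mem_union_right _ (Finset.mem_Ico.2 ⟨by omega, hi1⟩)
  calc _ ≤ _ := Finset.card_le_card hsub
    _ ≤ _ + (Finset.Ico (L + 1 - k) M).card := Finset.card_union_le _ _
    _ ≤ _ + k := by rw [Nat.card_Ico]; omega

lemma good_bounds {b k x : ℕ} (hb : 2 ≤ b) (hx : 0 < x) {ε : ℝ} {w : List ℕ}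
    (hwk : w.length = k) (hwb : ∀ d ∈ w, d < b) (hgood : EpsKNormal b ε k x) :
    (((b:ℝ)^k)⁻¹ - ε) * (digLen b x : ℝ) ≤ (occ w (digStr b x) : ℝ) ∧
      (occ w (digStr b x) : ℝ) ≤ (((b:ℝ)^k)⁻¹ + ε) * (digLen b x : ℝ) := by
  have h := hgood w hwk hwb
  have hℓ : (0:ℝ) < (digLen b x : ℝ) := by exact_mod_cast digLen_pos hb hx
  rw [abs_le] at h
  constructor
  · rw [← sub_nonneg]
    have := (le_div_iff₀ hℓ).1 (by linarith :
      ((b:ℝ)^k)⁻¹ - ε ≤ (occ w (digStr b x) : ℝ) / (digLen b x : ℝ))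
    linarith
  · have := (div_le_iff₀ hℓ).1 (by linarith :
      (occ w (digStr b x) : ℝ) / (digLen b x : ℝ) ≤ ((b:ℝ)^k)⁻¹ + ε)
    linarith

lemma occSum_bounds (b : ℕ) (hb : 2 ≤ b) (a : ℕ → ℕ) (ha : ∀ n, 1 ≤ n → 0 < a n)
    (k : ℕ) (hk : 1 ≤ k) (w : List ℕ) (hwk : w.length = k) (hwb : ∀ d ∈ w, d < b)
    (ε : ℝ) (hε0 : 0 < ε) (hεT : ε ≤ ((b:ℝ)^k)⁻¹) (m : ℕ) :
    (((b:ℝ)^k)⁻¹ - ε) * ((∑ n ∈ Finset.Icc 1 m, (digLen b (a n) : ℝ)) -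
        (((Finset.Icc 1 m).filter fun n => ¬ EpsKNormal b ε k (a n)).card : ℝ) *
          (((Finset.Icc 1 m).sup fun n => digLen b (a n) : ℕ) : ℝ)) ≤
      (∑ n ∈ Finset.range m, (occ w (digStr b (a (n+1))) : ℝ)) ∧
    (∑ n ∈ Finset.range m, (occ w (digStr b (a (n+1))) : ℝ)) ≤
      (((b:ℝ)^k)⁻¹ + ε) * (∑ n ∈ Finset.Icc 1 m, (digLen b (a n) : ℝ)) +
        (((Finset.Icc 1 m).filter fun n => ¬ EpsKNormal b ε k (a n)).card : ℝ) *
          (((Finset.Icc 1 m).sup fun n => digLen b (a n) : ℕ) : ℝ) := by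
  have hshift : (∑ n ∈ Finset.range m, (occ w (digStr b (a (n+1))) : ℝ)) =
      ∑ n ∈ Finset.Icc 1 m, (occ w (digStr b (a n)) : ℝ) := by
    rw [← Finset.Ico_add_one_right_eq_Icc, Finset.sum_Ico_eq_sum_range]
    simp [add_comm]
  rw [hshift]
  set T := ((b:ℝ)^k)⁻¹ with hT
  set X := (((Finset.Icc 1 m).sup fun n => digLen b (a n) : ℕ) : ℝ) with hX
  have hX0 : 0 ≤ X := Nat.cast_nonneg _
  have hdigX : ∀ n ∈ Finset.Icc 1 m, (digLen b (a n) : ℝ) ≤ X := fun n hn => by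
    rw [hX]
    exact_mod_cast Finset.le_sup (f := fun n => digLen b (a n)) hn
  have hoccℓ : ∀ n ∈ Finset.Icc 1 m, (occ w (digStr b (a n)) : ℝ) ≤ (digLen b (a n) : ℝ) := by
    intro n hn
    have := occ_le_length (w := w) (s := digStr b (a n)) (by omega)
    rw [length_digStr] at this
    exact_mod_cast this
  set G := (Finset.Icc 1 m).filter (fun n => EpsKNormal b ε k (a n)) with hG
  set Bd := (Finset.Icc 1 m).filter (fun n => ¬ EpsKNormal b ε k (a n)) with hBd
  have hsplit : ∀ f : ℕ → ℝ, ∑ n ∈ Finset.Icc 1 m, f n = (∑ n ∈ G, f n) + ∑ n ∈ Bd, f n :=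
    fun f => (Finset.sum_filter_add_sum_filter_not _ _ f).symm
  have hgood : ∀ n ∈ G, (T - ε) * (digLen b (a n) : ℝ) ≤ (occ w (digStr b (a n)) : ℝ) ∧
      (occ w (digStr b (a n)) : ℝ) ≤ (T + ε) * (digLen b (a n) : ℝ) := by
    intro n hn
    rw [hG, Finset.mem_filter, Finset.mem_Icc] at hn
    exact good_bounds hb (ha n hn.1.1) hwk hwb hn.2
  have hBdsum : ∑ n ∈ Bd, (digLen b (a n) : ℝ) ≤ (Bd.card : ℝ) * X := by
    calc ∑ n ∈ Bd, (digLen b (a n) : ℝ) ≤ Bd.card • X :=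
          Finset.sum_le_card_nsmul _ _ _ (fun n hn => hdigX n (Finset.filter_subset _ _ hn))
      _ = (Bd.card : ℝ) * X := nsmul_eq_mul _ _
  have hTε0 : 0 ≤ T - ε := by linarith
  constructor
  · have h1 : (∑ n ∈ Finset.Icc 1 m, (digLen b (a n) : ℝ)) - (Bd.card : ℝ) * X ≤
        ∑ n ∈ G, (digLen b (a n) : ℝ) := by
      rw [hsplit (fun n => (digLen b (a n) : ℝ))]
      linarith
    calc (T - ε) * ((∑ n ∈ Finset.Icc 1 m, (digLen b (a n) : ℝ)) - (Bd.card : ℝ) * X)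
        ≤ (T - ε) * ∑ n ∈ G, (digLen b (a n) : ℝ) := mul_le_mul_of_nonneg_left h1 hTε0
      _ = ∑ n ∈ G, (T - ε) * (digLen b (a n) : ℝ) := Finset.mul_sum _ _ _
      _ ≤ ∑ n ∈ G, (occ w (digStr b (a n)) : ℝ) :=
          Finset.sum_le_sum (fun n hn => (hgood n hn).1)
      _ ≤ (∑ n ∈ G, (occ w (digStr b (a n)) : ℝ)) + ∑ n ∈ Bd, (occ w (digStr b (a n)) : ℝ) :=
          le_add_of_nonneg_right (Finset.sum_nonneg fun n _ => Nat.cast_nonneg _)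
      _ = _ := (hsplit _).symm
  · have hGsum : ∑ n ∈ G, (digLen b (a n) : ℝ) ≤ ∑ n ∈ Finset.Icc 1 m, (digLen b (a n) : ℝ) :=
      Finset.sum_le_sum_of_subset_of_nonneg (Finset.filter_subset _ _)
        (fun n _ _ => Nat.cast_nonneg _)
    calc ∑ n ∈ Finset.Icc 1 m, (occ w (digStr b (a n)) : ℝ)
        = (∑ n ∈ G, (occ w (digStr b (a n)) : ℝ)) + ∑ n ∈ Bd, (occ w (digStr b (a n)) : ℝ) :=
          hsplit _
      _ ≤ (∑ n ∈ G, (T + ε) * (digLen b (a n) : ℝ)) + ∑ n ∈ Bd, (digLen b (a n) : ℝ) := by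
          refine add_le_add (Finset.sum_le_sum fun n hn => (hgood n hn).2)
            (Finset.sum_le_sum fun n hn => hoccℓ n (Finset.filter_subset _ _ hn))
      _ ≤ (T + ε) * (∑ n ∈ Finset.Icc 1 m, (digLen b (a n) : ℝ)) + (Bd.card : ℝ) * X := by
          rw [← Finset.mul_sum]
          exact add_le_add (mul_le_mul_of_nonneg_left hGsum (by linarith)) hBdsum

noncomputable def mOf (b : ℕ) (a : ℕ → ℕ) (M : ℕ) : ℕ :=
  Nat.findGreatest (fun m => (concatPrefix b a m).length ≤ M) M

lemma mOf_le (b : ℕ) (a : ℕ → ℕ) (M : ℕ) :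
    (concatPrefix b a (mOf b a M)).length ≤ M :=
  Nat.findGreatest_spec (P := fun m => (concatPrefix b a m).length ≤ M)
    (Nat.zero_le M) (by simp [concatPrefix])

lemma mOf_lt {b : ℕ} (hb : 2 ≤ b) {a : ℕ → ℕ} (ha : ∀ n : ℕ, 1 ≤ n → 0 < a n) (M : ℕ) :
    M < (concatPrefix b a (mOf b a M + 1)).length := by
  rcases le_or_gt (mOf b a M + 1) M with h | h
  · have := Nat.findGreatest_is_greatest (P := fun m => (concatPrefix b a m).length ≤ M)
      (k := mOf b a M + 1) (Nat.lt_succ_self _) h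
    omega
  · have h1 : M ≤ mOf b a M := by omega
    calc M < mOf b a M + 1 := by omega
      _ ≤ (concatPrefix b a (mOf b a M + 1)).length :=
        self_le_length_concatPrefix hb ha _

lemma ge_mOf {b : ℕ} (hb : 2 ≤ b) {a : ℕ → ℕ} (ha : ∀ n : ℕ, 1 ≤ n → 0 < a n)
    {t M : ℕ} (h : (concatPrefix b a t).length ≤ M) : t ≤ mOf b a M :=
  Nat.le_findGreatest (le_trans (self_le_length_concatPrefix hb ha t) h) h

lemma mOf_tendsto {b : ℕ} (hb : 2 ≤ b) {a : ℕ → ℕ} (ha : ∀ n : ℕ, 1 ≤ n → 0 < a n) :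
    Tendsto (mOf b a) atTop atTop := by
  rw [tendsto_atTop]
  intro t
  filter_upwards [eventually_ge_atTop (concatPrefix b a t).length] with M hM
  exact ge_mOf hb ha hM

/-- Real-valued length of the concatenated prefix. -/
noncomputable def LrF (b : ℕ) (a : ℕ → ℕ) (m : ℕ) : ℝ := ((concatPrefix b a m).length : ℝ)

/-- Real-valued maximal digit length. -/
noncomputable def XrF (b : ℕ) (a : ℕ → ℕ) (m : ℕ) : ℝ :=
  (((Finset.Icc 1 m).sup fun n => digLen b (a n) : ℕ) : ℝ)

/-- Real-valued count of bad indices. -/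
noncomputable def BcF (b : ℕ) (a : ℕ → ℕ) (ε : ℝ) (k m : ℕ) : ℝ :=
  ((((Finset.Icc 1 m).filter fun n => ¬ EpsKNormal b ε k (a n)).card : ℕ) : ℝ)

lemma LrF_sum (b : ℕ) (a : ℕ → ℕ) (m : ℕ) :
    LrF b a m = ∑ n ∈ Finset.Icc 1 m, (digLen b (a n) : ℝ) := by
  rw [LrF, length_concatPrefix]
  push_cast
  rfl

/-! ### The main theorem -/

set_option maxHeartbeats 1000000

/-- Normality criterion for concatenations (Pollack–Vandehey): if
(i) `m / ∑_{n=1}^m ℓ_b(a n) → 0`,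
(ii) `m · max_{1 ≤ n ≤ m} ℓ_b(a n) = O(∑_{n=1}^m ℓ_b(a n))`, and
(iii) for every `ε > 0` and `k ≥ 1` the number of `n ≤ m` such that `a n` is
not `(ε,k)`-normal in base `b` is `o(m)`,
then the concatenation `0.a₁a₂a₃⋯` is normal in base `b`. -/
theorem normality_criterion_for_concatenations
    (b : ℕ) (hb : 2 ≤ b) (a : ℕ → ℕ) (ha : ∀ n : ℕ, 1 ≤ n → 0 < a n)
    (h1 : Tendsto
      (fun m : ℕ => (m : ℝ) / ∑ n ∈ Finset.Icc 1 m, (digLen b (a n) : ℝ))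
      atTop (nhds 0))
    (h2 : ∃ C : ℝ, 0 < C ∧ ∀ m : ℕ, 1 ≤ m →
      (m : ℝ) * (((Finset.Icc 1 m).sup fun n => digLen b (a n) : ℕ) : ℝ) ≤
        C * ∑ n ∈ Finset.Icc 1 m, (digLen b (a n) : ℝ))
    (h3 : ∀ ε : ℝ, 0 < ε → ∀ k : ℕ, 1 ≤ k →
      Tendsto
        (fun m : ℕ =>
          (((Finset.Icc 1 m).filter fun n => ¬ EpsKNormal b ε k (a n)).card : ℝ) / (m : ℝ))
        atTop (nhds 0)) :
    StreamNormal b (concatStream b a) := by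
  obtain ⟨C, hC0, h2⟩ := h2
  intro k hk w hwk hwb
  have hbR : (1:ℝ) ≤ (b:ℝ) := by exact_mod_cast (by omega : 1 ≤ b)
  have hbk : (1:ℝ) ≤ (b:ℝ)^k := one_le_pow₀ hbR
  set T : ℝ := ((b:ℝ)^k)⁻¹ with hTdef
  have hT0 : 0 < T := by rw [hTdef]; positivity
  have hT1 : T ≤ 1 := inv_le_one_of_one_le₀ hbk
  have hLsum : ∀ m : ℕ, LrF b a m = ∑ n ∈ Finset.Icc 1 m, (digLen b (a n) : ℝ) :=
    LrF_sum b a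
  have hLm : ∀ m : ℕ, (m:ℝ) ≤ LrF b a m := fun m => by
    rw [LrF]
    exact_mod_cast self_le_length_concatPrefix hb ha m
  have hX0 : ∀ m : ℕ, 0 ≤ XrF b a m := fun m => Nat.cast_nonneg _
  have h1' : Tendsto (fun m : ℕ => (m:ℝ) / LrF b a m) atTop (nhds 0) := by
    simpa only [hLsum] using h1
  have h2' : ∀ m : ℕ, 1 ≤ m → (m:ℝ) * XrF b a m ≤ C * LrF b a m := fun m hm => by
    rw [XrF, hLsum]
    exact h2 m hm
  have hratio : ∀ η : ℝ, 0 < η → ∀ᶠ m : ℕ in atTop, (m:ℝ) ≤ η * LrF b a m := by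
    intro η hη
    filter_upwards [h1'.eventually_lt_const hη, eventually_ge_atTop 1] with m hm hm1
    have hm1' : (1:ℝ) ≤ (m:ℝ) := by exact_mod_cast hm1
    have hL0 : (0:ℝ) < LrF b a m := lt_of_lt_of_le (by linarith) (hLm m)
    rw [div_lt_iff₀ hL0] at hm
    linarith
  have hLsucc : ∀ m : ℕ, LrF b a m ≤ LrF b a (m+1) ∧
      LrF b a (m+1) ≤ LrF b a m + XrF b a (m+1) := by
    intro m
    have he : (concatPrefix b a (m+1)).length =
        (concatPrefix b a m).length + digLen b (a (m+1)) := by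
      rw [concatPrefix_succ, List.length_append, length_digStr]
    have hd : (digLen b (a (m+1)) : ℝ) ≤ XrF b a (m+1) := by
      rw [XrF]
      exact_mod_cast Finset.le_sup (f := fun n => digLen b (a n))
        (Finset.mem_Icc.2 ⟨by omega, le_rfl⟩)
    have hd0 : (0:ℝ) ≤ (digLen b (a (m+1)) : ℝ) := Nat.cast_nonneg _
    constructor
    · rw [LrF, LrF, he]; push_cast; linarith
    · rw [LrF, LrF, he]; push_cast; linarith
  have hXkey : ∀ᶠ m : ℕ in atTop, ((m:ℝ)+1) * XrF b a (m+1) ≤ (2*C) * LrF b a m := by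
    filter_upwards [eventually_ge_atTop ⌈2*C⌉₊] with m hm
    have hm2C : 2*C ≤ (m:ℝ) := le_trans (Nat.le_ceil _) (by exact_mod_cast hm)
    have h := h2' (m+1) (by omega)
    push_cast at h
    have hL' : LrF b a (m+1) ≤ LrF b a m + XrF b a (m+1) := (hLsucc m).2
    have h2'' : ((m:ℝ)+1) * XrF b a (m+1) ≤ C * LrF b a m + C * XrF b a (m+1) := by
      calc ((m:ℝ)+1) * XrF b a (m+1) ≤ C * LrF b a (m+1) := h
        _ ≤ C * (LrF b a m + XrF b a (m+1)) := mul_le_mul_of_nonneg_left hL' hC0.le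
        _ = C * LrF b a m + C * XrF b a (m+1) := by ring
    have hCX : C * XrF b a (m+1) ≤ (((m:ℝ)+1)/2) * XrF b a (m+1) :=
      mul_le_mul_of_nonneg_right (by linarith) (hX0 (m+1))
    linarith
  -- now the ε-δ part
  rw [Metric.tendsto_atTop]
  intro δ hδ0
  set ε : ℝ := min (δ/8) (T/2) with hεdef
  have hε0 : 0 < ε := lt_min (by linarith) (by linarith)
  have hεδ : ε ≤ δ/8 := min_le_left _ _
  have hεT2 : ε ≤ T/2 := min_le_right _ _
  have hB : Tendsto (fun m : ℕ => BcF b a ε k m / (m:ℝ)) atTop (nhds 0) := by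
    simpa only [BcF] using h3 ε hε0 k hk
  have hB0 : ∀ m : ℕ, 0 ≤ BcF b a ε k m := fun m => Nat.cast_nonneg _
  have hBX : ∀ η : ℝ, 0 < η →
      ∀ᶠ m : ℕ in atTop, BcF b a ε k m * XrF b a m ≤ η * LrF b a m := by
    intro η hη
    filter_upwards [hB.eventually_lt_const (show (0:ℝ) < η/C by positivity),
      eventually_ge_atTop 1] with m hm hm1
    have hm1' : (1:ℝ) ≤ (m:ℝ) := by exact_mod_cast hm1
    have hm0 : (0:ℝ) < (m:ℝ) := by linarith
    rw [div_lt_iff₀ hm0] at hm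
    have hs1 : BcF b a ε k m * XrF b a m ≤ (η/C * (m:ℝ)) * XrF b a m :=
      mul_le_mul_of_nonneg_right hm.le (hX0 m)
    have hs2 : (η/C) * ((m:ℝ) * XrF b a m) ≤ (η/C) * (C * LrF b a m) :=
      mul_le_mul_of_nonneg_left (h2' m hm1) (by positivity)
    have hs3 : (η/C) * (C * LrF b a m) = η * LrF b a m := by
      field_simp
    calc BcF b a ε k m * XrF b a m ≤ (η/C * (m:ℝ)) * XrF b a m := hs1
      _ = (η/C) * ((m:ℝ) * XrF b a m) := by ring
      _ ≤ (η/C) * (C * LrF b a m) := hs2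
      _ = η * LrF b a m := hs3
  have hsum : ∀ m : ℕ,
      (T - ε) * (LrF b a m - BcF b a ε k m * XrF b a m) ≤
        (∑ n ∈ Finset.range m, (occ w (digStr b (a (n+1))) : ℝ)) ∧
      (∑ n ∈ Finset.range m, (occ w (digStr b (a (n+1))) : ℝ)) ≤
        (T + ε) * LrF b a m + BcF b a ε k m * XrF b a m := by
    intro m
    have h := occSum_bounds b hb a ha k hk w hwk hwb ε hε0 (by
      rw [hTdef] at hεT2 hT0
      linarith) m
    rw [← hLsum] at h
    exact h
  -- the eventual facts, in m
  have hEm : ∀ᶠ m : ℕ in atTop,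
      (1 ≤ m ∧ k ≤ m) ∧
      XrF b a (m+1) ≤ LrF b a m ∧
      4 * XrF b a (m+1) ≤ (δ/8) * LrF b a m ∧
      BcF b a ε k m * XrF b a m ≤ (δ/8) * LrF b a m ∧
      BcF b a ε k (m+1) * XrF b a (m+1) ≤ (δ/16) * LrF b a m ∧
      (k:ℝ) * ((m:ℝ)+1) + (k:ℝ) ≤ (δ/8) * LrF b a m := by
    have hk0 : (0:ℝ) < (k:ℝ) := by exact_mod_cast hk
    have A3 := (tendsto_add_atTop_nat 1).eventually (hBX (δ/32) (by linarith))
    have A4 := hratio (δ/(32*(k:ℝ))) (by positivity)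
    filter_upwards [hXkey, hBX (δ/8) (by linarith), A3, A4, eventually_ge_atTop 1,
      eventually_ge_atTop k, eventually_ge_atTop ⌈2*C⌉₊, eventually_ge_atTop ⌈64*C/δ⌉₊]
      with m a1 a2 a3 a4 am1 amk am2C am64
    have hm1' : (1:ℝ) ≤ (m:ℝ) := by exact_mod_cast am1
    have hL0 : (0:ℝ) < LrF b a m := lt_of_lt_of_le (by linarith) (hLm m)
    have hm2C : 2*C ≤ (m:ℝ) := le_trans (Nat.le_ceil _) (by exact_mod_cast am2C)
    have hm64 : 64*C/δ ≤ (m:ℝ) := le_trans (Nat.le_ceil _) (by exact_mod_cast am64)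
    have hX0' := hX0 (m+1)
    -- e3 : X' ≤ L
    have he3 : XrF b a (m+1) ≤ LrF b a m := by
      have h5 : (2*C) * LrF b a m ≤ ((m:ℝ)+1) * LrF b a m :=
        mul_le_mul_of_nonneg_right (by linarith) hL0.le
      have h6 : ((m:ℝ)+1) * XrF b a (m+1) ≤ ((m:ℝ)+1) * LrF b a m := le_trans a1 h5
      exact le_of_mul_le_mul_left h6 (by linarith)
    -- e2 : 4X' ≤ (δ/8)L
    have he2 : 4 * XrF b a (m+1) ≤ (δ/8) * LrF b a m := by
      have h7 : (64*C/δ) * XrF b a (m+1) ≤ ((m:ℝ)+1) * XrF b a (m+1) :=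
        mul_le_mul_of_nonneg_right (by linarith) hX0'
      have h8 : (64*C/δ) * XrF b a (m+1) ≤ (2*C) * LrF b a m := le_trans h7 a1
      have h9 := mul_le_mul_of_nonneg_left h8 (show (0:ℝ) ≤ δ/(16*C) by positivity)
      have e1 : δ/(16*C) * ((64*C/δ) * XrF b a (m+1)) = 4 * XrF b a (m+1) := by
        field_simp
        ring
      have e2 : δ/(16*C) * ((2*C) * LrF b a m) = (δ/8) * LrF b a m := by
        field_simp
        ring
      rw [e1, e2] at h9
      exact h9
    -- e5 : B' X' ≤ (δ/16) L
    have he5 : BcF b a ε k (m+1) * XrF b a (m+1) ≤ (δ/16) * LrF b a m := by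
      have h10 : (δ/32) * LrF b a (m+1) ≤ (δ/32) * (2 * LrF b a m) := by
        have := (hLsucc m).2
        apply mul_le_mul_of_nonneg_left _ (by linarith)
        linarith
      calc BcF b a ε k (m+1) * XrF b a (m+1) ≤ (δ/32) * LrF b a (m+1) := a3
        _ ≤ (δ/32) * (2 * LrF b a m) := h10
        _ = (δ/16) * LrF b a m := by ring
    -- e6 : k(m+1)+k ≤ (δ/8) L
    have he6 : (k:ℝ) * ((m:ℝ)+1) + (k:ℝ) ≤ (δ/8) * LrF b a m := by
      have hkm : (k:ℝ) ≤ (m:ℝ) := by exact_mod_cast amk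
      have h11 : (k:ℝ) * (m:ℝ) ≤ (k:ℝ) * ((δ/(32*(k:ℝ))) * LrF b a m) :=
        mul_le_mul_of_nonneg_left a4 hk0.le
      have h12 : (k:ℝ) * ((δ/(32*(k:ℝ))) * LrF b a m) = (δ/32) * LrF b a m := by
        field_simp
      have hk1' : (1:ℝ) ≤ (k:ℝ) := by exact_mod_cast hk
      have h13 : (δ/(32*(k:ℝ))) * LrF b a m ≤ (δ/32) * LrF b a m := by
        apply mul_le_mul_of_nonneg_right _ hL0.le
        apply div_le_div_of_nonneg_left (by linarith) (by norm_num)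
        linarith
      -- k(m+1) + k = k m + 2k ≤ k m + 2 m
      have h14 : (k:ℝ) * ((m:ℝ)+1) + (k:ℝ) = (k:ℝ) * (m:ℝ) + 2*(k:ℝ) := by ring
      have h15 : 2*(k:ℝ) ≤ 2*(m:ℝ) := by linarith
      have h16 : (m:ℝ) ≤ (δ/(32*(k:ℝ))) * LrF b a m := a4
      rw [h14]
      calc (k:ℝ) * (m:ℝ) + 2*(k:ℝ) ≤ (δ/32) * LrF b a m + 2*((δ/32) * LrF b a m) := by
            rw [h12] at h11
            linarith
        _ ≤ (δ/8) * LrF b a m := by nlinarith [hL0.le, hδ0]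
    exact ⟨⟨am1, amk⟩, he3, he2, a2, he5, he6⟩
  have hEM := (mOf_tendsto hb ha).eventually hEm
  rw [eventually_atTop] at hEM
  obtain ⟨N, hN⟩ := hEM
  refine ⟨N, fun M hM => ?_⟩
  obtain ⟨⟨hm1, hkm⟩, he3, he2, he4, he5, he6⟩ := hN M hM
  show dist ((F b a k w M : ℝ) / (M:ℝ)) T < δ
  set m := mOf b a M with hmdef
  -- natural-number facts
  have n1 : (concatPrefix b a m).length ≤ M := mOf_le b a M
  have n2 : M < (concatPrefix b a (m+1)).length := mOf_lt hb ha M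
  have n3 : k ≤ (concatPrefix b a (m+1)).length :=
    le_trans (by omega : k ≤ m+1) (self_le_length_concatPrefix hb ha (m+1))
  have c1 : occ w (concatPrefix b a m) ≤ F b a k w M := occ_le_F hb ha hk hwk n1
  have c2 : F b a k w M ≤ occ w (concatPrefix b a (m+1)) + k :=
    F_le_occ_add hb ha hk hwk (le_of_lt n2) n3
  have c3 : ∑ n ∈ Finset.range m, occ w (digStr b (a (n+1))) ≤ occ w (concatPrefix b a m) :=
    sum_occ_le_occ_concatPrefix b a w (by omega) m
  have c4 : occ w (concatPrefix b a (m+1)) ≤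
      (∑ n ∈ Finset.range (m+1), occ w (digStr b (a (n+1)))) + w.length * (m+1) :=
    occ_concatPrefix_le_sum b a w (by omega) (m+1)
  rw [hwk] at c4
  -- real versions
  obtain ⟨s1, _⟩ := hsum m
  obtain ⟨_, s2⟩ := hsum (m+1)
  have r1 : (∑ n ∈ Finset.range m, (occ w (digStr b (a (n+1))) : ℝ)) ≤ (F b a k w M : ℝ) := by
    exact_mod_cast le_trans c3 c1
  have r2 : (F b a k w M : ℝ) ≤
      (∑ n ∈ Finset.range (m+1), (occ w (digStr b (a (n+1))) : ℝ)) +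
        (k:ℝ) * ((m:ℝ)+1) + (k:ℝ) := by
    have h := le_trans c2 (Nat.add_le_add_right c4 k)
    have h' : (F b a k w M : ℝ) ≤
        ((∑ n ∈ Finset.range (m+1), (occ w (digStr b (a (n+1))) : ℝ)) +
          (k:ℝ) * ((m:ℝ)+1)) + (k:ℝ) := by exact_mod_cast h
    linarith
  have low : (T - ε) * (LrF b a m - BcF b a ε k m * XrF b a m) ≤ (F b a k w M : ℝ) :=
    le_trans s1 r1
  have high : (F b a k w M : ℝ) ≤
      (T + ε) * LrF b a (m+1) + BcF b a ε k (m+1) * XrF b a (m+1) +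
        (k:ℝ) * ((m:ℝ)+1) + (k:ℝ) := by
    linarith [r2, s2]
  -- real bounds on M
  have hm1' : (1:ℝ) ≤ (m:ℝ) := by exact_mod_cast hm1
  have hL0 : (0:ℝ) < LrF b a m := lt_of_lt_of_le (by linarith) (hLm m)
  have hLM : LrF b a m ≤ (M:ℝ) := by
    rw [LrF]
    exact_mod_cast n1
  have hML : (M:ℝ) ≤ LrF b a (m+1) := by
    rw [LrF]
    exact_mod_cast le_of_lt n2
  have hM0 : (0:ℝ) < (M:ℝ) := lt_of_lt_of_le hL0 hLM
  have hLL' : LrF b a (m+1) ≤ LrF b a m + XrF b a (m+1) := (hLsucc m).2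
  have hX0' := hX0 (m+1)
  have hX0m := hX0 m
  have hB0m := hB0 m
  have hB0m' := hB0 (m+1)
  have hBXm0 : 0 ≤ BcF b a ε k m * XrF b a m := mul_nonneg hB0m hX0m
  -- upper estimate : F - T M ≤ (δ/2) M
  have hup : (F b a k w M : ℝ) - T * (M:ℝ) ≤ (δ/2) * (M:ℝ) := by
    have u1 : T * (LrF b a (m+1) - (M:ℝ)) ≤ 1 * (LrF b a (m+1) - (M:ℝ)) :=
      mul_le_mul_of_nonneg_right hT1 (by linarith)
    have u2 : ε * LrF b a (m+1) ≤ (δ/8) * LrF b a (m+1) :=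
      mul_le_mul_of_nonneg_right hεδ (by linarith)
    have u3 : (δ/8) * LrF b a (m+1) ≤ (δ/8) * (2 * LrF b a m) :=
      mul_le_mul_of_nonneg_left (by linarith) (by linarith)
    have u4 : (δ/2) * LrF b a m ≤ (δ/2) * (M:ℝ) :=
      mul_le_mul_of_nonneg_left hLM (by linarith)
    have uring : (T + ε) * LrF b a (m+1) - T * (M:ℝ) =
        T * (LrF b a (m+1) - (M:ℝ)) + ε * LrF b a (m+1) := by ring
    -- X' ≤ (δ/32) L
    have uX : XrF b a (m+1) ≤ (δ/32) * LrF b a m := by linarith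
    linarith
  -- lower estimate : T M - F ≤ (δ/2) M
  have hlo : T * (M:ℝ) - (F b a k w M : ℝ) ≤ (δ/2) * (M:ℝ) := by
    have v0 : (M:ℝ) - LrF b a m ≤ XrF b a (m+1) := by linarith
    have v1 : T * ((M:ℝ) - LrF b a m) ≤ 1 * ((M:ℝ) - LrF b a m) :=
      mul_le_mul_of_nonneg_right hT1 (by linarith)
    have v2 : ε * LrF b a m ≤ (δ/8) * LrF b a m :=
      mul_le_mul_of_nonneg_right hεδ hL0.le
    have v3 : (T - ε) * (BcF b a ε k m * XrF b a m) ≤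
        1 * (BcF b a ε k m * XrF b a m) :=
      mul_le_mul_of_nonneg_right (by linarith) hBXm0
    have v4 : (δ/2) * LrF b a m ≤ (δ/2) * (M:ℝ) :=
      mul_le_mul_of_nonneg_left hLM (by linarith)
    have vring : T * (M:ℝ) - (T - ε) * (LrF b a m - BcF b a ε k m * XrF b a m) =
        T * ((M:ℝ) - LrF b a m) + ε * LrF b a m +
          (T - ε) * (BcF b a ε k m * XrF b a m) := by ring
    have uX : XrF b a (m+1) ≤ (δ/32) * LrF b a m := by linarith
    linarith
  -- conclude
  have hdist : |(F b a k w M : ℝ) / (M:ℝ) - T| ≤ δ/2 := by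
    rw [abs_le]
    constructor
    · have h' : (T - δ/2) * (M:ℝ) ≤ (F b a k w M : ℝ) := by nlinarith
      have := (le_div_iff₀ hM0).2 h'
      linarith
    · have h' : (F b a k w M : ℝ) ≤ (T + δ/2) * (M:ℝ) := by nlinarith
      have := (div_le_iff₀ hM0).2 h'
      linarith
  rw [Real.dist_eq]
  linarith
end

section
/- For the block-constant digit sequence s, every diagonal 2-block has asymptotic frequency 1/10: for each digit d ∈ {0, ..., 9}, the number of positions j < L_N − 1 with s_j = d and s_{j+1} = d, divided by L_N − 1, tends to 1/10 as N → ∞. -/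
open Filter

/-- The index `n ≥ 1` of the block containing position `j`: the unique `n ≥ 1`
with `n(n-1)/2 ≤ j < n(n+1)/2`, defined as the least `n ≥ 1` with `j < n(n+1)/2`. -/
def blockOf (j : ℕ) : ℕ :=
  Nat.find (show ∃ n : ℕ, 0 < n ∧ j < n * (n + 1) / 2 from
    ⟨j + 1, Nat.succ_pos j, by
      have h : (j + 1) * 2 ≤ (j + 1) * (j + 1 + 1) := by nlinarith
      have h2 := (Nat.le_div_iff_mul_le (by norm_num : 0 < 2)).mpr h
      omega⟩)

/-- The block-constant digit sequence: `s j = n mod 10` for the unique `n ≥ 1`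
with `n(n-1)/2 ≤ j < n(n+1)/2`; i.e. the concatenation, for `n = 1, 2, 3, …`,
of `n` copies of the digit `n mod 10`. -/
def s (j : ℕ) : ℕ := blockOf j % 10

/-- `L N = N(N+1)/2`, the total length of the first `N` blocks. -/
def L (N : ℕ) : ℕ := N * (N + 1) / 2

lemma two_L (n : ℕ) : 2 * L n = n * (n + 1) :=
  Nat.mul_div_cancel' (even_iff_two_dvd.mp (Nat.even_mul_succ_self n))
lemma L_succ (n : ℕ) : L (n+1) = L n + (n+1) := by
  have h1 := two_L n; have h2 := two_L (n+1)
  have h3 : (n+1) * (n+1+1) = n*(n+1) + 2*(n+1) := by ring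
  omega
lemma L_mono : Monotone L := fun a b h =>
  Nat.div_le_div_right (Nat.mul_le_mul h (by omega))
lemma blockOf_eq {j n : ℕ} (h1 : 0 < n) (h2 : L (n-1) ≤ j) (h3 : j < L n) :
    blockOf j = n := by
  unfold blockOf
  rw [Nat.find_eq_iff]
  refine ⟨⟨h1, h3⟩, ?_⟩
  rintro m hm ⟨hm0, hmlt⟩
  have hle : L m ≤ L (n-1) := L_mono (by omega)
  have hjm : j < L m := hmlt
  omega
lemma s_eq {j n : ℕ} (h1 : 0 < n) (h2 : L (n-1) ≤ j) (h3 : j < L n) : s j = n % 10 := by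
  rw [s, blockOf_eq h1 h2 h3]

lemma count_eq (d N : ℕ) :
    ((Finset.range (L N - 1)).filter fun j => s j = d ∧ s (j + 1) = d).card
      = ∑ n ∈ Finset.range (N+1), if n % 10 = d then n - 1 else 0 := by
  induction N with
  | zero => simp [L]
  | succ N ih =>
    rcases Nat.eq_zero_or_pos N with rfl | hN
    · norm_num [L, Finset.sum_range_succ]
    · have hLN : 1 ≤ L N := by
        have h2 := two_L N
        have : 1 * 2 ≤ N * (N + 1) := Nat.mul_le_mul hN (by omega)
        omega
      have hLs := L_succ N
      have hLpred : L N = L (N-1) + N := by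
        have h := L_succ (N-1)
        have h2 : N - 1 + 1 = N := by omega
        rw [h2] at h; omega
      set a := L N - 1 with ha
      have hL1 : L (N+1) - 1 = a + (N+1) := by omega
      rw [Finset.sum_range_succ, ← ih, hL1, Finset.range_eq_Ico,
        ← Finset.Ico_union_Ico_eq_Ico (Nat.zero_le a) (Nat.le_add_right a (N+1)),
        Finset.filter_union,
        Finset.card_union_of_disjoint
          (Finset.disjoint_filter_filter (Finset.Ico_disjoint_Ico_consecutive 0 a (a+(N+1)))),
        ← Finset.range_eq_Ico]
      congr 1
      have hsplit : Finset.Ico a (a+(N+1)) = insert a (Finset.Ico (a+1) (a+(N+1))) :=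
        (Finset.insert_Ico_add_one_left_eq_Ico (by omega)).symm
      have hPa : ¬ (s a = d ∧ s (a+1) = d) := by
        have hsa : s a = N % 10 := s_eq hN (by omega) (by omega)
        have hsa1 : s (a+1) = (N+1) % 10 := by
          refine s_eq (n := N+1) (by omega) ?_ ?_
          · simp only [Nat.add_sub_cancel]; omega
          · omega
        rintro ⟨e1, e2⟩
        omega
      have hPj : ∀ j ∈ Finset.Ico (a+1) (a+(N+1)),
          ((s j = d ∧ s (j+1) = d) ↔ (N+1) % 10 = d) := by
        intro j hj
        rw [Finset.mem_Ico] at hj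
        have hsj : s j = (N+1) % 10 := by
          refine s_eq (n := N+1) (by omega) ?_ ?_
          · simp only [Nat.add_sub_cancel]; omega
          · omega
        have hsj1 : s (j+1) = (N+1) % 10 := by
          refine s_eq (n := N+1) (by omega) ?_ ?_
          · simp only [Nat.add_sub_cancel]; omega
          · omega
        rw [hsj, hsj1, and_self]
      rw [hsplit, Finset.filter_insert, if_neg hPa]
      by_cases hcase : (N+1) % 10 = d
      · rw [Finset.filter_true_of_mem (fun j hj => (hPj j hj).mpr hcase), if_pos hcase,
          Nat.card_Ico]
        omega
      · rw [Finset.filter_false_of_mem (fun j hj => fun h => hcase ((hPj j hj).mp h)),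
          if_neg hcase, Finset.card_empty]
lemma g_bounds (d N : ℕ) (hd : d ≤ 9) :
    N*N ≤ 20 * (∑ n ∈ Finset.range (N+1), if n % 10 = d then n - 1 else 0) + 28*N + 333
    ∧ 20 * (∑ n ∈ Finset.range (N+1), if n % 10 = d then n - 1 else 0) ≤ N*N + 26*N + 153 := by
  set g := ∑ n ∈ Finset.range (N+1), if n % 10 = d then n - 1 else 0 with hgdef
  set a := if d = 0 then 10 else d with hadef
  have ha1 : 1 ≤ a := by rw [hadef]; split <;> omega
  have ha10 : a ≤ 10 := by rw [hadef]; split <;> omega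
  have hamod : a % 10 = d := by rw [hadef]; split <;> omega
  set m := (N + 10 - a) / 10 with hmdef
  have h0 : g = ∑ n ∈ (Finset.range (N+1)).filter (fun n => 0 < n ∧ n % 10 = d), (n - 1) := by
    rw [hgdef, Finset.sum_filter]
    apply Finset.sum_congr rfl
    intro n _
    split_ifs <;> omega
  have hfilter : (Finset.range (N+1)).filter (fun n => 0 < n ∧ n % 10 = d)
      = (Finset.range m).image (fun i => a + 10*i) := by
    ext n
    simp only [Finset.mem_filter, Finset.mem_image, Finset.mem_range]
    constructor
    · rintro ⟨hn, hn0, hmod⟩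
      exact ⟨(n - a)/10, by omega, by omega⟩
    · rintro ⟨i, hi, rfl⟩
      omega
  have hinj : Set.InjOn (fun i => a + 10*i) (Finset.range m) := by
    intro i _ j _ h
    simp only at h; omega
  have hsum : g = ∑ i ∈ Finset.range m, (a + 10*i - 1) := by
    rw [h0, hfilter, Finset.sum_image hinj]
  have hsum2 : g = m * (a-1) + 10 * ∑ i ∈ Finset.range m, i := by
    rw [hsum]
    have : ∀ i ∈ Finset.range m, a + 10*i - 1 = (a-1) + 10*i := by intro i _; omega
    rw [Finset.sum_congr rfl this, Finset.sum_add_distrib, Finset.sum_const,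
      Finset.card_range, ← Finset.mul_sum, smul_eq_mul]
  have hgauss : (∑ i ∈ Finset.range m, i) * 2 = m * (m - 1) := Finset.sum_range_id_mul_two m
  have hM : m * (m-1) + m = m * m := by
    cases m with
    | zero => simp
    | succ k => simp [Nat.succ_sub_one]; ring
  -- key numeric facts
  have hb : a - 1 ≤ 9 := by omega
  have hm1 : 10 * m + a ≤ N + 10 := by omega
  have hm2 : N + 10 < 10 * m + 10 + a := by omega
  have h2g : 2 * g = 2 * (m * (a-1)) + 10 * (m * (m-1)) := by omega
  constructor
  · nlinarith [h2g, hM, hb, hm1, hm2, ha1, ha10]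
  · nlinarith [h2g, hM, hb, hm1, hm2, ha1, ha10]
lemma aux_tendsto (d : ℕ) (hd : d ≤ 9) :
    Filter.Tendsto
      (fun N : ℕ =>
        (((Finset.range (L N - 1)).filter fun j => s j = d ∧ s (j + 1) = d).card : ℝ) /
          ((L N : ℝ) - 1))
      Filter.atTop (nhds (1 / 10)) := by
  have hlim : Filter.Tendsto (fun N : ℕ => (12:ℝ) / N) Filter.atTop (nhds 0) :=
    tendsto_const_div_atTop_nhds_zero_nat 12
  have hlo : Filter.Tendsto (fun N : ℕ => 1/10 - (12:ℝ)/N) Filter.atTop (nhds (1/10)) := by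
    simpa using tendsto_const_nhds.sub hlim
  have hhi : Filter.Tendsto (fun N : ℕ => 1/10 + (12:ℝ)/N) Filter.atTop (nhds (1/10)) := by
    simpa using tendsto_const_nhds.add hlim
  refine tendsto_of_tendsto_of_tendsto_of_le_of_le' hlo hhi ?_ ?_
  · filter_upwards [Filter.eventually_ge_atTop 11] with N hN
    obtain ⟨hb1, hb2⟩ := g_bounds d N hd
    rw [count_eq d N]
    set g : ℕ := ∑ n ∈ Finset.range (N+1), if n % 10 = d then n - 1 else 0 with hg
    have hu : (11:ℝ) ≤ (N:ℝ) := by exact_mod_cast hN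
    have hu0 : (0:ℝ) < (N:ℝ) := by linarith
    have hL : 2 * ((L N : ℕ):ℝ) = (N:ℝ)*(N:ℝ) + (N:ℝ) := by
      have h := two_L N
      have : ((2 * L N : ℕ):ℝ) = ((N * (N+1) : ℕ):ℝ) := by rw [h]
      push_cast at this
      linarith
    have hLpos : (0:ℝ) < ((L N : ℕ):ℝ) - 1 := by nlinarith
    have hc1 : (N:ℝ)*(N:ℝ) ≤ 20*(g:ℝ) + 28*(N:ℝ) + 333 := by exact_mod_cast hb1
    have he : (1:ℝ)/10 - 12/(N:ℝ) = ((N:ℝ) - 120)/(10*(N:ℝ)) := by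
      field_simp
      norm_num
    rw [he, div_le_div_iff₀ (by positivity) hLpos,
      show ((L N : ℕ):ℝ) - 1 = ((N:ℝ)*(N:ℝ) + (N:ℝ) - 2)/2 from by linarith]
    have h5 : (N:ℝ)*((N:ℝ)*(N:ℝ)) ≤ (N:ℝ)*(20*(g:ℝ) + 28*(N:ℝ) + 333) :=
      mul_le_mul_of_nonneg_left hc1 (by linarith)
    nlinarith [h5, hu, mul_nonneg (by linarith : (0:ℝ) ≤ (N:ℝ) - 11) (by linarith : (0:ℝ) ≤ (N:ℝ))]
  · filter_upwards [Filter.eventually_ge_atTop 11] with N hN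
    obtain ⟨hb1, hb2⟩ := g_bounds d N hd
    rw [count_eq d N]
    set g : ℕ := ∑ n ∈ Finset.range (N+1), if n % 10 = d then n - 1 else 0 with hg
    have hu : (11:ℝ) ≤ (N:ℝ) := by exact_mod_cast hN
    have hu0 : (0:ℝ) < (N:ℝ) := by linarith
    have hL : 2 * ((L N : ℕ):ℝ) = (N:ℝ)*(N:ℝ) + (N:ℝ) := by
      have h := two_L N
      have : ((2 * L N : ℕ):ℝ) = ((N * (N+1) : ℕ):ℝ) := by rw [h]
      push_cast at this
      linarith
    have hLpos : (0:ℝ) < ((L N : ℕ):ℝ) - 1 := by nlinarith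
    have hc2 : 20*(g:ℝ) ≤ (N:ℝ)*(N:ℝ) + 26*(N:ℝ) + 153 := by exact_mod_cast hb2
    have he : (1:ℝ)/10 + 12/(N:ℝ) = ((N:ℝ) + 120)/(10*(N:ℝ)) := by
      field_simp
      norm_num
    rw [he, div_le_div_iff₀ hLpos (by positivity),
      show ((L N : ℕ):ℝ) - 1 = ((N:ℝ)*(N:ℝ) + (N:ℝ) - 2)/2 from by linarith]
    have h6 : (N:ℝ)*(20*(g:ℝ)) ≤ (N:ℝ)*((N:ℝ)*(N:ℝ) + 26*(N:ℝ) + 153) :=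
      mul_le_mul_of_nonneg_left hc2 (by linarith)
    nlinarith [h6, hu, mul_nonneg (by linarith : (0:ℝ) ≤ (N:ℝ) - 11) (by linarith : (0:ℝ) ≤ (N:ℝ))]

/-- Every diagonal 2-block `dd` has asymptotic frequency `1/10` in the
block-constant sequence `s`: the number of positions `j < L N - 1` with
`s j = d` and `s (j+1) = d`, divided by `L N - 1`, tends to `1/10`. -/
theorem blockConstant_diagonal_block_freq (d : ℕ) (hd : d ≤ 9) :
    Tendsto
      (fun N : ℕ =>
        (((Finset.range (L N - 1)).filter fun j => s j = d ∧ s (j + 1) = d).card : ℝ) /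
          ((L N : ℝ) - 1))
      atTop (nhds (1 / 10)) := aux_tendsto d hd
end
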